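/- arXiv:1207.4433 — 11 statements merged into one kernel-verified Lean document; each statement's English description precedes it below -/
import Mathlib

section
/- Let Z be a real topological vector space and C ⊆ Z a convex cone with 0 ∈ C. Then the family F(Z,C) = {A ⊆ Z : A = cl(A + C)}, partially ordered by A ≤ B ⟺ A ⊇ B, is a complete lattice. For every nonempty family 𝒜 ⊆ F(Z,C), the infimum of 𝒜 is cl(⋃_{A∈𝒜} A) and the supremum of 𝒜 is ⋂_{A∈𝒜} A; the infimum of the empty family is ∅ and the supremum of the empty family is Z. -/
open Set Pointwise Topology

/-! Since `0 ∈ C`, a set `A` satisfies `A = cl (A + C)` exactly when it is closed and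
`A + C ⊆ A`. Both conditions pass to intersections, and since translations are continuous,
`A + C ⊆ A` passes from a set to its closure, so both also pass to closures of unions. -/

section

variable {Z : Type*} [AddMonoid Z] {C : Set Z}

theorem sUnion_add_subset_sUnion {𝒜 : Set (Set Z)} (h : ∀ A ∈ 𝒜, A + C ⊆ A) :
    ⋃₀ 𝒜 + C ⊆ ⋃₀ 𝒜 := by
  rw [sUnion_add]
  exact iUnion₂_subset fun A hA => (h A hA).trans (subset_sUnion_of_mem hA)

theorem sInter_add_subset_sInter {𝒜 : Set (Set Z)} (h : ∀ A ∈ 𝒜, A + C ⊆ A) :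
    ⋂₀ 𝒜 + C ⊆ ⋂₀ 𝒜 :=
  subset_sInter fun A hA => (add_subset_add_right (sInter_subset_of_mem hA)).trans (h A hA)

theorem eq_closure_add_iff_isClosed_and_add_subset [TopologicalSpace Z] (hC0 : (0 : Z) ∈ C)
    {A : Set Z} :
    A = closure (A + C) ↔ IsClosed A ∧ A + C ⊆ A := by
  constructor
  · intro hA
    constructor
    · rw [hA]
      exact isClosed_closure
    · calc A + C ⊆ closure (A + C) := subset_closure
        _ = A := hA.symm
  · rintro ⟨hA_closed, hA_add⟩
    exact ((subset_add_left A hC0).trans subset_closure).antisymm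
      (closure_minimal hA_add hA_closed)

theorem closure_add_subset_of_add_subset [TopologicalSpace Z] [ContinuousAdd Z] {s : Set Z}
    (h : s + C ⊆ s) :
    closure s + C ⊆ closure s :=
  calc closure s + C ⊆ closure s + closure C := add_subset_add_left subset_closure
    _ ⊆ closure (s + C) := vadd_set_closure_subset s C
    _ ⊆ closure s := closure_mono h

end

theorem F_is_complete_lattice_general {Z : Type*} [AddCommGroup Z] [TopologicalSpace Z]
    [IsTopologicalAddGroup Z]
    (C : Set Z)
    (hC0 : (0 : Z) ∈ C) :
    (∀ 𝒜 ⊆ {A : Set Z | A = closure (A + C)}, 𝒜.Nonempty →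
      -- infimum of a nonempty family is `cl ⋃ 𝒜`
      (closure (⋃₀ 𝒜) ∈ {A : Set Z | A = closure (A + C)} ∧
        (∀ A ∈ 𝒜, A ⊆ closure (⋃₀ 𝒜)) ∧
        (∀ B ∈ {A : Set Z | A = closure (A + C)},
          (∀ A ∈ 𝒜, A ⊆ B) → closure (⋃₀ 𝒜) ⊆ B)) ∧
      -- supremum of a nonempty family is `⋂ 𝒜`
      ((⋂₀ 𝒜) ∈ {A : Set Z | A = closure (A + C)} ∧
        (∀ A ∈ 𝒜, ⋂₀ 𝒜 ⊆ A) ∧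
        (∀ B ∈ {A : Set Z | A = closure (A + C)},
          (∀ A ∈ 𝒜, B ⊆ A) → B ⊆ ⋂₀ 𝒜))) ∧
    -- infimum of the empty family is `∅`, the greatest element w.r.t. `≤` (= `⊇`)
    ((∅ : Set Z) ∈ {A : Set Z | A = closure (A + C)} ∧
      ∀ B ∈ {A : Set Z | A = closure (A + C)}, (∅ : Set Z) ⊆ B) ∧
    -- supremum of the empty family is `Z`, the least element w.r.t. `≤` (= `⊇`)
    ((univ : Set Z) ∈ {A : Set Z | A = closure (A + C)} ∧
      ∀ B ∈ {A : Set Z | A = closure (A + C)}, B ⊆ (univ : Set Z)) := by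
  have mem_iff (A : Set Z) : A ∈ {A : Set Z | A = closure (A + C)} ↔ IsClosed A ∧ A + C ⊆ A :=
    eq_closure_add_iff_isClosed_and_add_subset hC0
  refine ⟨fun 𝒜 h𝒜 _ => ?_, ⟨(mem_iff ∅).2 ⟨isClosed_empty, empty_add.subset⟩,
    fun B _ => empty_subset B⟩, ⟨(mem_iff univ).2 ⟨isClosed_univ, subset_univ _⟩,
    fun B _ => subset_univ B⟩⟩
  have h𝒜_closed (A : Set Z) (hA : A ∈ 𝒜) : IsClosed A := ((mem_iff A).1 (h𝒜 hA)).1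
  have h𝒜_add (A : Set Z) (hA : A ∈ 𝒜) : A + C ⊆ A := ((mem_iff A).1 (h𝒜 hA)).2
  refine ⟨⟨?_, fun A hA => (subset_sUnion_of_mem hA).trans subset_closure,
    fun B hB hB_ub => closure_minimal (sUnion_subset hB_ub) ((mem_iff B).1 hB).1⟩,
    ⟨?_, fun A hA => sInter_subset_of_mem hA, fun B _ hB_lb => subset_sInter hB_lb⟩⟩
  · exact (mem_iff _).2
      ⟨isClosed_closure, closure_add_subset_of_add_subset (sUnion_add_subset_sUnion h𝒜_add)⟩
  · exact (mem_iff _).2 ⟨isClosed_sInter h𝒜_closed, sInter_add_subset_sInter h𝒜_add⟩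

/-- The family `F(Z,C) = {A ⊆ Z | A = cl(A + C)}`, partially ordered by reverse inclusion
`A ≤ B ⟺ A ⊇ B`, is a complete lattice: every nonempty family `𝒜 ⊆ F(Z,C)` has an infimum,
namely `cl ⋃ 𝒜` (the greatest lower bound w.r.t. `≤`, i.e. the `⊇`-largest member of `F(Z,C)`
below every member of `𝒜`), and a supremum, namely `⋂ 𝒜`; the infimum of the empty family is
`∅` (the top element) and the supremum of the empty family is `Z` (the bottom element). -/
theorem F_is_complete_lattice {Z : Type*} [AddCommGroup Z] [Module ℝ Z] [TopologicalSpace Z]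
    [IsTopologicalAddGroup Z] [ContinuousSMul ℝ Z]
    (C : Set Z) (hCconv : Convex ℝ C) (hCcone : ∀ t : ℝ, 0 < t → ∀ z ∈ C, t • z ∈ C)
    (hC0 : (0 : Z) ∈ C) :
    (∀ 𝒜 ⊆ {A : Set Z | A = closure (A + C)}, 𝒜.Nonempty →
      -- infimum of a nonempty family is `cl ⋃ 𝒜`
      (closure (⋃₀ 𝒜) ∈ {A : Set Z | A = closure (A + C)} ∧
        (∀ A ∈ 𝒜, A ⊆ closure (⋃₀ 𝒜)) ∧
        (∀ B ∈ {A : Set Z | A = closure (A + C)},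
          (∀ A ∈ 𝒜, A ⊆ B) → closure (⋃₀ 𝒜) ⊆ B)) ∧
      -- supremum of a nonempty family is `⋂ 𝒜`
      ((⋂₀ 𝒜) ∈ {A : Set Z | A = closure (A + C)} ∧
        (∀ A ∈ 𝒜, ⋂₀ 𝒜 ⊆ A) ∧
        (∀ B ∈ {A : Set Z | A = closure (A + C)},
          (∀ A ∈ 𝒜, B ⊆ A) → B ⊆ ⋂₀ 𝒜))) ∧
    -- infimum of the empty family is `∅`, the greatest element w.r.t. `≤` (= `⊇`)
    ((∅ : Set Z) ∈ {A : Set Z | A = closure (A + C)} ∧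
      ∀ B ∈ {A : Set Z | A = closure (A + C)}, (∅ : Set Z) ⊆ B) ∧
    -- supremum of the empty family is `Z`, the least element w.r.t. `≤` (= `⊇`)
    ((univ : Set Z) ∈ {A : Set Z | A = closure (A + C)} ∧
      ∀ B ∈ {A : Set Z | A = closure (A + C)}, B ⊆ (univ : Set Z)) :=
  F_is_complete_lattice_general C hC0
end

section
/- Let Y and Z be real topological vector spaces, C ⊆ Z a convex cone with 0 ∈ C, y* a continuous linear functional on Y, and z* a continuous linear functional on Z. Then the set-valued map S_{(y*,z*)} : Y → P(Z), defined by S_{(y*,z*)}(y) = {z ∈ Z : y*(y) ≤ z*(z)}, satisfies S_{(y*,z*)}(y) ∈ G(Z,C) for every y ∈ Y if and only if z* ∈ C+. -/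
open Set Pointwise Topology

/-!
Each value `{z | y*(y) ≤ z*(z)}` is a closed convex half-space, and a closed convex set `A`
satisfies `A = cl co (A + C)` exactly when `A + C ⊆ A` (as `0 ∈ C`). A half-space is stable
under adding `C` iff `z*` is nonnegative on `C`; for the converse, test the value at `y = 0`,
which contains `0`.
-/

section ClosureConvexHullAdd

variable {E : Type*} [AddCommGroup E] [Module ℝ E] [TopologicalSpace E] {A C : Set E}

theorem eq_closure_convexHull_add_iff (hA : IsClosed A) (hAconv : Convex ℝ A)
    (hC0 : (0 : E) ∈ C) :
    A = closure (convexHull ℝ (A + C)) ↔ A + C ⊆ A := by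
  constructor
  · intro h
    calc A + C ⊆ closure (convexHull ℝ (A + C)) := (subset_convexHull ℝ _).trans subset_closure
      _ = A := h.symm
  · intro h
    have hAC : A + C = A := h.antisymm (subset_add_left A hC0)
    rw [hAC, hAconv.convexHull_eq, hA.closure_eq]

end ClosureConvexHullAdd

section HalfSpace

variable {E F : Type*} [AddCommGroup E] [FunLike F E ℝ] [AddMonoidHomClass F E ℝ]
  {f : F} {C : Set E}

theorem setOf_le_add_subset (hf : ∀ z ∈ C, 0 ≤ f z) (a : ℝ) :
    {z | a ≤ f z} + C ⊆ {z | a ≤ f z} := by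
  rintro _ ⟨x, hx, c, hc, rfl⟩
  have : 0 ≤ f c := hf c hc
  simp only [mem_ofPred_eq, map_add] at hx ⊢
  linarith

theorem nonneg_of_setOf_nonneg_add_subset (h : {z | 0 ≤ f z} + C ⊆ {z | 0 ≤ f z}) :
    ∀ z ∈ C, 0 ≤ f z := fun z hz => by
  simpa using h (add_mem_add (show (0 : E) ∈ {z | 0 ≤ f z} by simp) hz)

end HalfSpace

theorem SMap_mem_G_iff_general {Y Z : Type*}
    [AddCommGroup Y] [Module ℝ Y] [TopologicalSpace Y]
    [AddCommGroup Z] [Module ℝ Z] [TopologicalSpace Z]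
    (C : Set Z)
    (hC0 : (0 : Z) ∈ C) (y' : Y →L[ℝ] ℝ) (z' : Z →L[ℝ] ℝ) :
    (∀ y : Y, {z : Z | y' y ≤ z' z} ∈ {A : Set Z | A = closure (convexHull ℝ (A + C))})
      ↔ (∀ z ∈ C, 0 ≤ z' z) := by
  have hG (y : Y) : {z : Z | y' y ≤ z' z} = closure (convexHull ℝ ({z | y' y ≤ z' z} + C)) ↔
      {z : Z | y' y ≤ z' z} + C ⊆ {z | y' y ≤ z' z} :=
    eq_closure_convexHull_add_iff (isClosed_le continuous_const z'.continuous)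
      (convex_halfSpace_ge (z' : Z →ₗ[ℝ] ℝ).isLinear _) hC0
  simp only [mem_ofPred_eq, hG]
  refine ⟨fun h => nonneg_of_setOf_nonneg_add_subset ?_, fun h y => setOf_le_add_subset h _⟩
  simpa using h 0

/-- For continuous linear functionals `y*` on `Y` and `z*` on `Z`, the set-valued map
`S_{(y*,z*)}(y) = {z | y*(y) ≤ z*(z)}` takes all its values in
`G(Z,C) = {A | A = cl co (A + C)}` if and only if `z* ∈ C⁺`. -/
theorem SMap_mem_G_iff {Y Z : Type*}
    [AddCommGroup Y] [Module ℝ Y] [TopologicalSpace Y] [IsTopologicalAddGroup Y]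
    [ContinuousSMul ℝ Y]
    [AddCommGroup Z] [Module ℝ Z] [TopologicalSpace Z] [IsTopologicalAddGroup Z]
    [ContinuousSMul ℝ Z]
    (C : Set Z) (hCconv : Convex ℝ C) (hCcone : ∀ t : ℝ, 0 < t → ∀ z ∈ C, t • z ∈ C)
    (hC0 : (0 : Z) ∈ C) (y' : Y →L[ℝ] ℝ) (z' : Z →L[ℝ] ℝ) :
    (∀ y : Y, {z : Z | y' y ≤ z' z} ∈ {A : Set Z | A = closure (convexHull ℝ (A + C))})
      ↔ (∀ z ∈ C, 0 ≤ z' z) :=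
  SMap_mem_G_iff_general C hC0 y' z'
end

section
/- (Reconstruction of the primal.) Assume C+ ≠ {0}, and let f : X → P(Z) and g : X → P(Y) satisfy f(x) ∈ G(Z,C), g(x) ∈ G(Y,D) and f(x) ≠ Z for every x ∈ X. Then for every x ∈ X: ⋂_{(y*,z*) ∈ Y*×(C+∖{0})} l(x,y*,z*) = f(x) if 0 ∈ g(x), and ⋂_{(y*,z*) ∈ Y*×(C+∖{0})} l(x,y*,z*) = ∅ if 0 ∉ g(x). -/
open Set Pointwise Topology Filter

noncomputable section

variable {X Y Z : Type*}
  [AddCommGroup X] [Module ℝ X] [TopologicalSpace X] [IsTopologicalAddGroup X]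
  [ContinuousSMul ℝ X] [LocallyConvexSpace ℝ X]
  [AddCommGroup Y] [Module ℝ Y] [TopologicalSpace Y] [IsTopologicalAddGroup Y]
  [ContinuousSMul ℝ Y] [LocallyConvexSpace ℝ Y]
  [AddCommGroup Z] [Module ℝ Z] [TopologicalSpace Z] [IsTopologicalAddGroup Z]
  [ContinuousSMul ℝ Z] [LocallyConvexSpace ℝ Z]

/-- The positive dual cone `C⁺`. -/
def posDual (C : Set Z) : Set (Z →L[ℝ] ℝ) := {z' | ∀ z ∈ C, 0 ≤ z' z}

/-- The halfspace `S(z*) = {z | 0 ≤ z*(z)}`. -/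
def SPos (z' : Z →L[ℝ] ℝ) : Set Z := {z | 0 ≤ z' z}

/-- `S_{(y*,z*)}(y) = {z | y*(y) ≤ z*(z)}`. -/
def SMap (y' : Y →L[ℝ] ℝ) (z' : Z →L[ℝ] ℝ) (y : Y) : Set Z := {z | y' y ≤ z' z}

/-- Scalarization: `inf {z*(z) | z ∈ A}` in `EReal` (inf ∅ = +∞). -/
def scal (z' : Z →L[ℝ] ℝ) (A : Set Z) : EReal := ⨅ z ∈ A, (z' z : EReal)

open Classical in
/-- Addition on `EReal` with the convention `(+∞) + (−∞) = (−∞) + (+∞) = +∞`. -/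
def eadd (a b : EReal) : EReal := if a = ⊤ ∨ b = ⊤ then ⊤ else a + b

/-- The set-valued Lagrangian `l(x,y*,z*) = f(x) ⊕ cl ⋃_{y ∈ g(x)} S_{(y*,z*)}(y)`. -/
def lag (f : X → Set Z) (g : X → Set Y) (x : X) (y' : Y →L[ℝ] ℝ) (z' : Z →L[ℝ] ℝ) :
    Set Z :=
  closure (f x + closure (⋃ y ∈ g x, SMap y' z' y))

/-- The dual objective `h(y*,z*) = cl ⋃_x l(x,y*,z*)`. -/
def dualObj (f : X → Set Z) (g : X → Set Y) (y' : Y →L[ℝ] ℝ) (z' : Z →L[ℝ] ℝ) : Set Z :=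
  closure (⋃ x, lag f g x y' z')

/-- The value function `v(y) = cl ⋃ {f(x) | y ∈ g(x)}`. -/
def valFn (f : X → Set Z) (g : X → Set Y) (y : Y) : Set Z :=
  closure (⋃ x ∈ {x | y ∈ g x}, f x)

/-
When `0 ∈ g x` every `l(x, y*, z*)` contains `f x`, so only `⋂ ⊆ f x` has content. A point outside
`f x` is strictly separated from it by a functional `z*`, which lies in `C⁺ ∖ {0}` because it is
bounded below on `f x + C ⊆ f x`; with `y* = 0` the Lagrangian then lies in a halfspace missing the
point. If `0 ∉ g x`, separating `0` from `g x` gives `y*` with `y* ≥ u > 0` on `g x`, and the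
halfspaces containing `l(x, n • y*, z*)` escape to infinity as `n → ∞`; here `f x ≠ Z` provides
the `z*`.
-/

omit [IsTopologicalAddGroup Z] [ContinuousSMul ℝ Z] [LocallyConvexSpace ℝ Z] in
lemma mem_posDual_of_forall_le {C A : Set Z} (hCcone : ∀ t : ℝ, 0 < t → ∀ z ∈ C, t • z ∈ C)
    (hAC : A + C ⊆ A) (hA : A.Nonempty) {z' : Z →L[ℝ] ℝ} {u : ℝ} (hu : ∀ a ∈ A, u ≤ z' a) :
    z' ∈ posDual C := by
  intro c hc
  by_contra! hneg
  obtain ⟨a, ha⟩ := hA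
  set t := (z' a - u + 1) / -z' c
  have ht : 0 < t := div_pos (by linarith [hu a ha]) (by linarith)
  have htc : t * z' c = -(z' a - u + 1) := by
    rw [← neg_eq_iff_eq_neg, ← mul_neg]
    exact div_mul_cancel₀ _ (by linarith)
  have := hu _ (hAC (add_mem_add ha (hCcone t ht c hc)))
  rw [map_add, map_smul, smul_eq_mul, htc] at this
  linarith

lemma exists_mem_posDual_diff_separating {C A : Set Z}
    (hCcone : ∀ t : ℝ, 0 < t → ∀ z ∈ C, t • z ∈ C) (hAG : A = closure (convexHull ℝ (A + C)))
    (hA : A.Nonempty) {z₀ : Z} (hz₀ : z₀ ∉ A) :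
    ∃ z' ∈ posDual C \ {0}, ∃ u : ℝ, z' z₀ < u ∧ ∀ a ∈ A, u < z' a := by
  have hAC : A + C ⊆ A := fun w hw => hAG ▸ subset_closure (subset_convexHull ℝ _ hw)
  obtain ⟨z', u, hz₀u, hAu⟩ := geometric_hahn_banach_point_closed
    (hAG ▸ (convex_convexHull ℝ _).closure) (hAG ▸ isClosed_closure) hz₀
  refine ⟨z', ⟨mem_posDual_of_forall_le hCcone hAC hA fun a ha => (hAu a ha).le, ?_⟩,
    u, hz₀u, hAu⟩
  rintro rfl
  obtain ⟨a, ha⟩ := hA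
  have := hAu a ha
  simp only [zero_apply] at hz₀u this
  linarith

section Lagrangian

variable {f : X → Set Z} {g : X → Set Y} {x : X}

omit [AddCommGroup X] [Module ℝ X] [TopologicalSpace X] [IsTopologicalAddGroup X]
  [ContinuousSMul ℝ X] [LocallyConvexSpace ℝ X]

section

variable {y' : Y →L[ℝ] ℝ} {z' : Z →L[ℝ] ℝ}

omit [IsTopologicalAddGroup Y] [ContinuousSMul ℝ Y] [LocallyConvexSpace ℝ Y]
  [IsTopologicalAddGroup Z] [ContinuousSMul ℝ Z] [LocallyConvexSpace ℝ Z]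

lemma nonempty_of_mem_lag {z : Z} (hz : z ∈ lag f g x y' z') :
    (f x).Nonempty ∧ (g x).Nonempty := by
  obtain ⟨hf, hS⟩ := Set.add_nonempty.1 (closure_nonempty_iff.1 ⟨z, hz⟩)
  obtain ⟨w, hw⟩ := closure_nonempty_iff.1 hS
  obtain ⟨y, hy, -⟩ := mem_iUnion₂.1 hw
  exact ⟨hf, y, hy⟩

lemma subset_lag_of_zero_mem (h0 : (0 : Y) ∈ g x) : f x ⊆ lag f g x y' z' := by
  intro a ha
  have h0S : (0 : Z) ∈ closure (⋃ y ∈ g x, SMap y' z' y) :=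
    subset_closure (mem_biUnion h0 (by simp [SMap]))
  simpa only [lag, add_zero] using subset_closure (add_mem_add ha h0S)

lemma lag_subset_setOf_le {uf ug : ℝ} (hf : ∀ a ∈ f x, uf ≤ z' a) (hg : ∀ y ∈ g x, ug ≤ y' y) :
    lag f g x y' z' ⊆ {w | uf + ug ≤ z' w} := by
  have hclosed (v : ℝ) : IsClosed {w : Z | v ≤ z' w} :=
    isClosed_le continuous_const z'.continuous
  have hS : closure (⋃ y ∈ g x, SMap y' z' y) ⊆ {w | ug ≤ z' w} := by
    refine closure_minimal (iUnion₂_subset fun y hy w hw => ?_) (hclosed ug)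
    exact (hg y hy).trans hw
  refine closure_minimal ?_ (hclosed _)
  rintro _ ⟨a, ha, s, hs, rfl⟩
  simpa only [mem_ofPred_eq, map_add] using add_le_add (hf a ha) (hS hs)

end

variable {C : Set Z} {z : Z}

omit [IsTopologicalAddGroup Y] [ContinuousSMul ℝ Y] [LocallyConvexSpace ℝ Y] in
lemma mem_of_forall_mem_lag (hCcone : ∀ t : ℝ, 0 < t → ∀ z ∈ C, t • z ∈ C)
    (hfG : f x = closure (convexHull ℝ (f x + C))) (hC : (posDual C \ {0}).Nonempty)
    (hz : ∀ (y' : Y →L[ℝ] ℝ), ∀ z' ∈ posDual C \ {0}, z ∈ lag f g x y' z') :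
    z ∈ f x := by
  by_contra hzf
  obtain ⟨w', hw'⟩ := hC
  obtain ⟨z', hz', u, hzu, hfu⟩ := exists_mem_posDual_diff_separating hCcone hfG
    (nonempty_of_mem_lag (hz 0 w' hw')).1 hzf
  have := lag_subset_setOf_le (ug := 0) (fun a ha => (hfu a ha).le)
    (fun y _ => (zero_apply y).ge) (hz 0 z' hz')
  rw [mem_ofPred_eq, add_zero] at this
  linarith

lemma zero_mem_of_forall_mem_lag {D : Set Y} (hCcone : ∀ t : ℝ, 0 < t → ∀ z ∈ C, t • z ∈ C)
    (hfG : f x = closure (convexHull ℝ (f x + C))) (hgG : g x = closure (convexHull ℝ (g x + D)))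
    (hfZ : f x ≠ univ) (hC : (posDual C \ {0}).Nonempty)
    (hz : ∀ (y' : Y →L[ℝ] ℝ), ∀ z' ∈ posDual C \ {0}, z ∈ lag f g x y' z') :
    (0 : Y) ∈ g x := by
  by_contra h0
  obtain ⟨w', hw'⟩ := hC
  obtain ⟨w, hw⟩ := (ne_univ_iff_exists_notMem _).1 hfZ
  obtain ⟨z', hz', uf, -, hfu⟩ := exists_mem_posDual_diff_separating hCcone hfG
    (nonempty_of_mem_lag (hz 0 w' hw')).1 hw
  obtain ⟨y', ug, h0ug, hgug⟩ := geometric_hahn_banach_point_closed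
    (hgG ▸ (convex_convexHull ℝ _).closure) (hgG ▸ isClosed_closure) h0
  have hug : 0 < ug := by simpa using h0ug
  obtain ⟨n, hn⟩ := exists_nat_gt ((z' z - uf) / ug)
  rw [div_lt_iff₀ hug] at hn
  have hg (y) (hy : y ∈ g x) : n * ug ≤ ((n : ℝ) • y') y :=
    mul_le_mul_of_nonneg_left (hgug y hy).le n.cast_nonneg
  have := lag_subset_setOf_le (fun a ha => (hfu a ha).le) hg (hz _ z' hz')
  rw [mem_ofPred_eq] at this
  linarith

end Lagrangian

theorem reconstruction_of_primal_general
    (C : Set Z) (hCcone : ∀ t : ℝ, 0 < t → ∀ z ∈ C, t • z ∈ C)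
    (D : Set Y)
    (hCplus : posDual C ≠ {0})
    (f : X → Set Z) (g : X → Set Y)
    (hfG : ∀ x, f x = closure (convexHull ℝ (f x + C)))
    (hgG : ∀ x, g x = closure (convexHull ℝ (g x + D)))
    (hfZ : ∀ x, f x ≠ univ) :
    ∀ x : X,
      ((0 : Y) ∈ g x →
        (⋂ (y' : Y →L[ℝ] ℝ), ⋂ z' ∈ posDual C \ {0}, lag f g x y' z') = f x) ∧
      ((0 : Y) ∉ g x →
        (⋂ (y' : Y →L[ℝ] ℝ), ⋂ z' ∈ posDual C \ {0}, lag f g x y' z') = ∅) := by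
  have hC : (posDual C \ {0}).Nonempty := by
    have h0 : (0 : Z →L[ℝ] ℝ) ∈ posDual C := fun _ _ => le_rfl
    exact sdiff_nonempty.2 fun h => hCplus ((Nonempty.subset_singleton_iff ⟨0, h0⟩).1 h)
  intro x
  have hmem {z : Z} (hz : z ∈ ⋂ (y' : Y →L[ℝ] ℝ), ⋂ z' ∈ posDual C \ {0}, lag f g x y' z') :
      ∀ (y' : Y →L[ℝ] ℝ), ∀ z' ∈ posDual C \ {0}, z ∈ lag f g x y' z' := by
    simpa only [mem_iInter] using hz
  refine ⟨fun h0 => subset_antisymm ?_ ?_, fun h0 => eq_empty_of_forall_notMem fun z hz => ?_⟩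
  · exact fun z hz => mem_of_forall_mem_lag hCcone (hfG x) hC (hmem hz)
  · exact subset_iInter fun _ => subset_iInter₂ fun _ _ => subset_lag_of_zero_mem h0
  · exact h0 (zero_mem_of_forall_mem_lag hCcone (hfG x) (hgG x) (hfZ x) hC (hmem hz))

/-- **Reconstruction of the primal.** If `C⁺ ≠ {0}`, `f(x) ∈ G(Z,C)`, `g(x) ∈ G(Y,D)` and
`f(x) ≠ Z` for all `x`, then the supremum (intersection) of the Lagrangian over all dual
variables `(y*,z*) ∈ Y* × (C⁺∖{0})` equals `f(x)` if `0 ∈ g(x)` and `∅` otherwise. -/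
theorem reconstruction_of_primal
    (C : Set Z) (hCconv : Convex ℝ C) (hCcone : ∀ t : ℝ, 0 < t → ∀ z ∈ C, t • z ∈ C)
    (hC0 : (0 : Z) ∈ C)
    (D : Set Y) (hDconv : Convex ℝ D) (hDcone : ∀ t : ℝ, 0 < t → ∀ y ∈ D, t • y ∈ D)
    (hD0 : (0 : Y) ∈ D)
    (hCplus : posDual C ≠ {0})
    (f : X → Set Z) (g : X → Set Y)
    (hfG : ∀ x, f x = closure (convexHull ℝ (f x + C)))
    (hgG : ∀ x, g x = closure (convexHull ℝ (g x + D)))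
    (hfZ : ∀ x, f x ≠ univ) :
    ∀ x : X,
      ((0 : Y) ∈ g x →
        (⋂ (y' : Y →L[ℝ] ℝ), ⋂ z' ∈ posDual C \ {0}, lag f g x y' z') = f x) ∧
      ((0 : Y) ∉ g x →
        (⋂ (y' : Y →L[ℝ] ℝ), ⋂ z' ∈ posDual C \ {0}, lag f g x y' z') = ∅) :=
  reconstruction_of_primal_general C hCcone D hCplus f g hfG hgG hfZ
end
end

section
/- Assume C+ ≠ {0} and let f : X → P(Z) be a convex set-valued map (its graph {(x,z) : z ∈ f(x)} is convex) with f(x) ∈ F(Z,C) for all x ∈ X. Then f(x) ∈ G(Z,C) for every x ∈ X, and for every x ∈ X: f(x) = ⋂_{z* ∈ C+∖{0}} {z ∈ Z : φ_{f,z*}(x) ≤ z*(z)}. -/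
/-!
Each `f x` is a fibre of the convex graph, hence convex, and it is closed with `f x + C ⊆ f x`;
so it equals the closure of its convex hull, and by Hahn–Banach it is the intersection of the
closed half-spaces containing it. A functional strictly separating a point from `f x` is bounded
below on `f x`, and since `f x` is stable under adding the cone `C`, it lies in `C⁺`. When
`f x = ∅` every scalarization is `+∞`, and a single nonzero element of `C⁺` empties the
intersection.
-/

open Set Pointwise Topology Filter

noncomputable section

variable {X Y Z : Type*}
  [AddCommGroup X] [Module ℝ X] [TopologicalSpace X] [IsTopologicalAddGroup X]
  [ContinuousSMul ℝ X] [LocallyConvexSpace ℝ X]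
  [AddCommGroup Y] [Module ℝ Y] [TopologicalSpace Y] [IsTopologicalAddGroup Y]
  [ContinuousSMul ℝ Y] [LocallyConvexSpace ℝ Y]
  [AddCommGroup Z] [Module ℝ Z] [TopologicalSpace Z] [IsTopologicalAddGroup Z]
  [ContinuousSMul ℝ Z] [LocallyConvexSpace ℝ Z]

section ConvexSets

variable {𝕜 E F : Type*} [Semiring 𝕜] [PartialOrder 𝕜] [AddCommMonoid E] [Module 𝕜 E]

theorem Convex.prodMk_preimage [AddCommMonoid F] [Module 𝕜 F] {s : Set (E × F)}
    (hs : Convex 𝕜 s) (x : E) : Convex 𝕜 (Prod.mk x ⁻¹' s) := by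
  intro z₁ h₁ z₂ h₂ a b ha hb hab
  simpa [Convex.combo_self hab x] using hs h₁ h₂ ha hb hab

theorem closure_convexHull_eq_closure [TopologicalSpace E] {s : Set E}
    (hs : Convex 𝕜 (closure s)) : closure (convexHull 𝕜 s) = closure s :=
  (closure_minimal (convexHull_min subset_closure hs) isClosed_closure).antisymm
    (closure_mono (subset_convexHull 𝕜 s))

end ConvexSets

section Scalarization

variable {E : Type*} [AddCommGroup E] [Module ℝ E] [TopologicalSpace E]

theorem zero_mem_posDual (C : Set E) : (0 : E →L[ℝ] ℝ) ∈ posDual C := fun _ _ ↦ le_rfl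

theorem exists_ne_zero_mem_posDual {C : Set E} (hC : posDual C ≠ {0}) :
    ∃ e' ∈ posDual C, e' ≠ 0 := by
  by_contra! h
  exact hC (Set.eq_singleton_iff_unique_mem.mpr ⟨zero_mem_posDual C, h⟩)

theorem scal_le_of_mem {e' : E →L[ℝ] ℝ} {A : Set E} {e : E} (he : e ∈ A) :
    scal e' A ≤ e' e :=
  iInf₂_le e he

theorem le_scal_of_forall_le {e' : E →L[ℝ] ℝ} {A : Set E} {u : EReal}
    (h : ∀ e ∈ A, u ≤ e' e) : u ≤ scal e' A :=
  le_iInf₂ h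

@[simp]
theorem scal_empty (e' : E →L[ℝ] ℝ) : scal e' (∅ : Set E) = ⊤ := by
  simp [scal]

/-- Otherwise `e'` would tend to `-∞` along `w + t • c` as `t → ∞`. -/
theorem mem_posDual_of_forall_le_s4 {C : Set E} (hC : ∀ t : ℝ, 0 < t → ∀ e ∈ C, t • e ∈ C)
    {A : Set E} (hAC : A + C ⊆ A) {w : E} (hw : w ∈ A) {e' : E →L[ℝ] ℝ} {u : ℝ}
    (hu : ∀ e ∈ A, u ≤ e' e) : e' ∈ posDual C := by
  intro c hc
  by_contra! hneg
  set t : ℝ := (e' w - u + 1) / -e' c with ht_def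
  have ht : 0 < t := div_pos (by linarith [hu w hw]) (by linarith)
  have htc : t * e' c = -(e' w - u + 1) := by
    rw [ht_def, div_neg, neg_mul, div_mul_cancel₀ _ hneg.ne]
  have := hu _ (hAC (Set.add_mem_add hw (hC t ht c hc)))
  rw [map_add, map_smul, smul_eq_mul, htc] at this
  linarith

variable [IsTopologicalAddGroup E] [ContinuousSMul ℝ E] [LocallyConvexSpace ℝ E]

theorem exists_mem_posDual_lt_scal {C : Set E} (hC : ∀ t : ℝ, 0 < t → ∀ e ∈ C, t • e ∈ C)
    {A : Set E} (hA : Convex ℝ A) (hAc : IsClosed A) (hAC : A + C ⊆ A) (hAne : A.Nonempty)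
    {e : E} (he : e ∉ A) : ∃ e' ∈ posDual C \ {0}, (e' e : EReal) < scal e' A := by
  obtain ⟨e', u, heu, hAu⟩ := geometric_hahn_banach_point_closed hA hAc he
  obtain ⟨w, hw⟩ := hAne
  have hne : e' ≠ 0 := by
    rintro rfl
    linarith [hAu w hw, show (0 : E →L[ℝ] ℝ) e = 0 from rfl, show (0 : E →L[ℝ] ℝ) w = 0 from rfl]
  refine ⟨e', ⟨mem_posDual_of_forall_le_s4 hC hAC hw fun a ha ↦ (hAu a ha).le, hne⟩, ?_⟩
  calc (e' e : EReal) < u := EReal.coe_lt_coe heu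
    _ ≤ scal e' A := le_scal_of_forall_le fun a ha ↦ EReal.coe_le_coe (hAu a ha).le

theorem eq_biInter_scal_le {C : Set E} (hC : ∀ t : ℝ, 0 < t → ∀ e ∈ C, t • e ∈ C)
    (hCplus : posDual C ≠ {0}) {A : Set E} (hA : Convex ℝ A) (hAc : IsClosed A)
    (hAC : A + C ⊆ A) : A = ⋂ e' ∈ posDual C \ {0}, {e : E | scal e' A ≤ (e' e : EReal)} := by
  refine subset_antisymm (fun e he ↦ mem_iInter₂.mpr fun e' _ ↦ ?_) fun e he ↦ ?_
  · exact scal_le_of_mem he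
  rw [mem_iInter₂] at he
  rcases A.eq_empty_or_nonempty with rfl | hAne
  · obtain ⟨w, hw, hw0⟩ := exists_ne_zero_mem_posDual hCplus
    simpa using he w ⟨hw, hw0⟩
  · by_contra heA
    obtain ⟨e', he', hlt⟩ := exists_mem_posDual_lt_scal hC hA hAc hAC hAne heA
    exact (he e' he').not_gt hlt

end Scalarization

theorem scalarization_representation_general
    (C : Set Z) (hCcone : ∀ t : ℝ, 0 < t → ∀ z ∈ C, t • z ∈ C)
    (hCplus : posDual C ≠ {0})
    (f : X → Set Z)
    (hconv : Convex ℝ {q : X × Z | q.2 ∈ f q.1})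
    (hfF : ∀ x, f x = closure (f x + C)) :
    ∀ x : X,
      f x = closure (convexHull ℝ (f x + C)) ∧
      f x = ⋂ z' ∈ posDual C \ {0}, {z : Z | scal z' (f x) ≤ (z' z : EReal)} := by
  intro x
  have hconvx : Convex ℝ (f x) := hconv.prodMk_preimage x
  have hclosedx : IsClosed (f x) := by rw [hfF x]; exact isClosed_closure
  have hCx : f x + C ⊆ f x := subset_closure.trans (hfF x).ge
  refine ⟨?_, eq_biInter_scal_le hCcone hCplus hconvx hclosedx hCx⟩
  have hconv_closure : Convex ℝ (closure (f x + C)) := hfF x ▸ hconvx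
  exact (hfF x).trans (closure_convexHull_eq_closure hconv_closure).symm

/-- If `C⁺ ≠ {0}` and `f : X → P(Z)` is a convex set-valued map (its graph is convex) with
`f(x) ∈ F(Z,C)` for all `x`, then `f(x) ∈ G(Z,C)` for all `x`, and
`f(x) = ⋂_{z* ∈ C⁺∖{0}} {z | φ_{f,z*}(x) ≤ z*(z)}`. -/
theorem scalarization_representation
    (C : Set Z) (hCconv : Convex ℝ C) (hCcone : ∀ t : ℝ, 0 < t → ∀ z ∈ C, t • z ∈ C)
    (hC0 : (0 : Z) ∈ C) (hCplus : posDual C ≠ {0})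
    (f : X → Set Z)
    (hconv : Convex ℝ {q : X × Z | q.2 ∈ f q.1})
    (hfF : ∀ x, f x = closure (f x + C)) :
    ∀ x : X,
      f x = closure (convexHull ℝ (f x + C)) ∧
      f x = ⋂ z' ∈ posDual C \ {0}, {z : Z | scal z' (f x) ≤ (z' z : EReal)} :=
  scalarization_representation_general C hCcone hCplus f hconv hfF
end
end

section
/- (Scalarization and conjugation commute.) Let f : X → P(Z) be any set-valued map, x* ∈ X* and z* ∈ C+∖{0}. Then: (i) −φ*_{f,z*}(x*) = inf{z*(z) : z ∈ −f*(x*,z*)}, and (ii) −f*(x*,z*) = {z ∈ Z : −φ*_{f,z*}(x*) ≤ z*(z)}, where −φ*_{f,z*}(x*) = inf_{x ∈ X} [φ_{f,z*}(x) − x*(x)] is the negative of the classical Fenchel conjugate of φ_{f,z*} (with the conventions that the set in (ii) is ∅ if −φ*_{f,z*}(x*) = +∞ and Z if −φ*_{f,z*}(x*) = −∞). -/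
/-!
Write `α = inf_x [φ_{f,z*}(x) − x*(x)]`. Every point `w + s` with `w ∈ f x` and `s ∈ S_{(x*,z*)}(−x)`
satisfies `α ≤ z*(w) − x*(x) ≤ z*(w + s)`, so the union defining `−f*(x*,z*)` lies in the closed
halfspace `{α ≤ z*}`. Conversely, if `α < z*(u)` then some `x` and `w ∈ f x` have
`z*(w) − x*(x) < z*(u)`, i.e. `u − w ∈ S_{(x*,z*)}(−x)`, so the open halfspace `{α < z*}` lies in
the union. A nonzero functional is a surjective, hence open, map onto `ℝ`, so the closure of the
open halfspace is the closed one and the infimum of `z*` over `{α ≤ z*}` is `α`.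
-/

open Set Pointwise Topology Filter

noncomputable section

variable {X Y Z : Type*}
  [AddCommGroup X] [Module ℝ X] [TopologicalSpace X] [IsTopologicalAddGroup X]
  [ContinuousSMul ℝ X] [LocallyConvexSpace ℝ X]
  [AddCommGroup Y] [Module ℝ Y] [TopologicalSpace Y] [IsTopologicalAddGroup Y]
  [ContinuousSMul ℝ Y] [LocallyConvexSpace ℝ Y]
  [AddCommGroup Z] [Module ℝ Z] [TopologicalSpace Z] [IsTopologicalAddGroup Z]
  [ContinuousSMul ℝ Z] [LocallyConvexSpace ℝ Z]

/-- The (negative) Fenchel conjugate `−f*(x*,z*) = cl ⋃_x [f(x) + S_{(x*,z*)}(−x)]`. -/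
def negConj (f : X → Set Z) (x' : X →L[ℝ] ℝ) (z' : Z →L[ℝ] ℝ) : Set Z :=
  closure (⋃ x, (f x + SMap x' z' (-x)))

section

variable {E F : Type*} [AddCommGroup E] [Module ℝ E] [TopologicalSpace E]
  [AddCommGroup F] [Module ℝ F] [TopologicalSpace F]

theorem ContinuousLinearMap.surjective_of_ne_zero {φ : E →L[ℝ] ℝ} (hφ : φ ≠ 0) :
    Function.Surjective φ :=
  LinearMap.surjective (f := φ.toLinearMap) fun h => hφ (ContinuousLinearMap.coe_injective h)

theorem ContinuousLinearMap.setOf_le_subset_closure_setOf_lt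
    [IsTopologicalAddGroup E] [ContinuousSMul ℝ E] {φ : E →L[ℝ] ℝ} (hφ : φ ≠ 0) (a : EReal) :
    {z | a ≤ (φ z : EReal)} ⊆ closure {z | a < (φ z : EReal)} := by
  have hopen : IsOpenMap φ :=
    LinearMap.isOpenMap_of_finiteDimensional φ.toLinearMap (φ.surjective_of_ne_zero hφ)
  refine subset_trans ?_ (hopen.preimage_closure_eq_closure_preimage φ.continuous
    {r : ℝ | a < r}).subset
  intro z hz
  refine closure_mono (s := Ioi (φ z)) (fun r hr => lt_of_le_of_lt hz (EReal.coe_lt_coe hr)) ?_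
  rw [closure_Ioi]
  exact mem_Ici.2 le_rfl

theorem scal_le_of_mem_s5 {z' : F →L[ℝ] ℝ} {A : Set F} {w : F} (hw : w ∈ A) :
    scal z' A ≤ z' w :=
  iInf₂_le w hw

theorem scal_lt_coe_iff {z' : F →L[ℝ] ℝ} {A : Set F} {r : ℝ} :
    scal z' A < r ↔ ∃ w ∈ A, z' w < r := by
  simp only [scal, iInf_lt_iff, exists_prop, EReal.coe_lt_coe_iff]

theorem scal_setOf_le {z' : F →L[ℝ] ℝ} (hz' : z' ≠ 0) (a : EReal) :
    scal z' {z | a ≤ (z' z : EReal)} = a := by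
  refine le_antisymm ?_ (le_iInf₂ fun _ hz => hz)
  rw [← EReal.le_of_forall_lt_iff_le]
  intro r hr
  obtain ⟨z, rfl⟩ := z'.surjective_of_ne_zero hz' r
  exact scal_le_of_mem_s5 hr.le

/-- The negative classical conjugate `−φ*_{f,z*}(x*) = inf_x [φ_{f,z*}(x) − x*(x)]`. -/
def negConjScal (f : E → Set F) (x' : E →L[ℝ] ℝ) (z' : F →L[ℝ] ℝ) : EReal :=
  ⨅ x : E, (scal z' (f x) - (x' x : EReal))

variable (f : E → Set F) (x' : E →L[ℝ] ℝ) (z' : F →L[ℝ] ℝ)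

theorem add_SMap_neg_subset_setOf_negConjScal_le (x : E) :
    f x + SMap x' z' (-x) ⊆ {z | negConjScal f x' z' ≤ (z' z : EReal)} := by
  rintro _ ⟨w, hw, s, hs, rfl⟩
  have hs' : -x' x ≤ z' s := by simpa [SMap] using hs
  calc negConjScal f x' z' ≤ scal z' (f x) - (x' x : EReal) := iInf_le _ x
    _ ≤ (z' w : EReal) - (x' x : EReal) := EReal.sub_le_sub (scal_le_of_mem_s5 hw) le_rfl
    _ = ((z' w - x' x : ℝ) : EReal) := (EReal.coe_sub _ _).symm
    _ ≤ z' (w + s) := EReal.coe_le_coe_iff.2 (by rw [map_add]; linarith)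

theorem setOf_negConjScal_lt_subset_iUnion :
    {z | negConjScal f x' z' < (z' z : EReal)} ⊆ ⋃ x, (f x + SMap x' z' (-x)) := by
  intro u (hu : ⨅ x, (scal z' (f x) - (x' x : EReal)) < z' u)
  obtain ⟨x, hx⟩ := iInf_lt_iff.1 hu
  rw [EReal.sub_lt_iff (.inl (EReal.coe_ne_bot _)) (.inl (EReal.coe_ne_top _)),
    ← EReal.coe_add, scal_lt_coe_iff] at hx
  obtain ⟨w, hw, hlt⟩ := hx
  refine mem_iUnion.2 ⟨x, w, hw, u - w, ?_, add_sub_cancel w u⟩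
  simp only [SMap, mem_ofPred_eq, map_neg, map_sub]
  linarith

theorem negConj_eq_setOf_negConjScal_le [IsTopologicalAddGroup F] [ContinuousSMul ℝ F]
    (hz' : z' ≠ 0) :
    negConj f x' z' = {z | negConjScal f x' z' ≤ (z' z : EReal)} :=
  Subset.antisymm
    (closure_minimal (iUnion_subset (add_SMap_neg_subset_setOf_negConjScal_le f x' z'))
      (isClosed_le continuous_const (continuous_coe_real_ereal.comp z'.continuous)))
    ((z'.setOf_le_subset_closure_setOf_lt hz' _).trans
      (closure_mono (setOf_negConjScal_lt_subset_iUnion f x' z')))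

end

theorem scalarization_conjugation_commute_general
    (f : X → Set Z) (x' : X →L[ℝ] ℝ) (z' : Z →L[ℝ] ℝ)
    (hz0 : z' ≠ 0) :
    (⨅ x : X, (scal z' (f x) - (x' x : EReal))) = scal z' (negConj f x' z') ∧
    negConj f x' z'
      = {z : Z | (⨅ x : X, (scal z' (f x) - (x' x : EReal))) ≤ (z' z : EReal)} := by
  have hconj := negConj_eq_setOf_negConjScal_le f x' z' hz0
  refine ⟨?_, hconj⟩
  rw [hconj, scal_setOf_le hz0]
  rfl

/-- **Scalarization and conjugation commute.** For any set-valued `f : X → P(Z)`, `x* ∈ X*`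
and `z* ∈ C⁺∖{0}`:
(i) `−φ*_{f,z*}(x*) = inf {z*(z) | z ∈ −f*(x*,z*)}`, and
(ii) `−f*(x*,z*) = {z | −φ*_{f,z*}(x*) ≤ z*(z)}`,
where `−φ*_{f,z*}(x*) = inf_x [φ_{f,z*}(x) − x*(x)]` (in `EReal`, so the set in (ii) is `∅` if
this value is `+∞` and `Z` if it is `−∞`). -/
theorem scalarization_conjugation_commute
    (C : Set Z) (hCconv : Convex ℝ C) (hCcone : ∀ t : ℝ, 0 < t → ∀ z ∈ C, t • z ∈ C)
    (hC0 : (0 : Z) ∈ C)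
    (f : X → Set Z) (x' : X →L[ℝ] ℝ) (z' : Z →L[ℝ] ℝ)
    (hz' : z' ∈ posDual C) (hz0 : z' ≠ 0) :
    (⨅ x : X, (scal z' (f x) - (x' x : EReal))) = scal z' (negConj f x' z') ∧
    negConj f x' z'
      = {z : Z | (⨅ x : X, (scal z' (f x) - (x' x : EReal))) ≤ (z' z : EReal)} :=
  scalarization_conjugation_commute_general f x' z' hz0
end
end

section
/- (Scalarized problems.) Let f : X → P(Z) with f(x) = cl(f(x)+C) for all x, g : X → P(Y), and z* ∈ C+∖{0}. Then the following are equivalent: (a) cl(co(⋃{f(x) ⊕ S(z*) : x ∈ X, 0 ∈ g(x)})) ≠ Z; (b) −∞ < inf{φ_{f,z*}(x) : x ∈ X, 0 ∈ g(x)}. -/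
open Set Pointwise Topology Filter

noncomputable section

variable {X Y Z : Type*}
  [AddCommGroup X] [Module ℝ X] [TopologicalSpace X] [IsTopologicalAddGroup X]
  [ContinuousSMul ℝ X] [LocallyConvexSpace ℝ X]
  [AddCommGroup Y] [Module ℝ Y] [TopologicalSpace Y] [IsTopologicalAddGroup Y]
  [ContinuousSMul ℝ Y] [LocallyConvexSpace ℝ Y]
  [AddCommGroup Z] [Module ℝ Z] [TopologicalSpace Z] [IsTopologicalAddGroup Z]
  [ContinuousSMul ℝ Z] [LocallyConvexSpace ℝ Z]

/-! If the infimum of `z*` over the feasible values is `−∞`, every point of `Z` lies above some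
feasible value in the direction of `z*`, so the union of the sets `f(x) ⊕ S(z*)` is already all
of `Z`. Conversely a finite lower bound `m` puts that union inside the closed half-space
`{z* ≥ m}`, which contains its closed convex hull and is a proper subset of `Z` since `z* ≠ 0`. -/

theorem ContinuousLinearMap.setOf_le_apply_ne_univ {E : Type*} [AddCommGroup E] [Module ℝ E]
    [TopologicalSpace E] {φ : E →L[ℝ] ℝ} (hφ : φ ≠ 0) (m : ℝ) : {w | m ≤ φ w} ≠ univ := by
  obtain ⟨z₀, hz₀⟩ : ∃ z₀, φ z₀ ≠ 0 := DFunLike.ne_iff.mp hφ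
  intro huniv
  have hw : ((m - 1) / φ z₀) • z₀ ∈ {w | m ≤ φ w} := huniv ▸ mem_univ _
  simp only [mem_ofPred_eq, map_smul, smul_eq_mul, div_mul_cancel₀ _ hz₀] at hw
  linarith

section

variable {E : Type*} [AddCommGroup E] [Module ℝ E] [TopologicalSpace E] {z' : E →L[ℝ] ℝ}

theorem coe_le_scal_iff {A : Set E} {m : ℝ} : (m : EReal) ≤ scal z' A ↔ ∀ a ∈ A, m ≤ z' a := by
  simp only [scal, le_iInf₂_iff, EReal.coe_le_coe_iff]

theorem mem_add_SPos_of_scal_lt {A : Set E} {w : E} (h : scal z' A < z' w) :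
    w ∈ A + SPos z' := by
  simp only [scal, iInf_lt_iff, EReal.coe_lt_coe_iff] at h
  obtain ⟨a, ha, hlt⟩ := h
  refine ⟨a, ha, w - a, ?_, add_sub_cancel a w⟩
  simp only [SPos, mem_ofPred_eq, map_sub]
  linarith

theorem closure_add_SPos_subset_setOf_le {A : Set E} {m : ℝ} (hA : ∀ a ∈ A, m ≤ z' a) :
    closure (A + SPos z') ⊆ {w | m ≤ z' w} := by
  refine closure_minimal ?_ (isClosed_le continuous_const z'.continuous)
  rintro _ ⟨a, ha, s, hs, rfl⟩
  have hs' : 0 ≤ z' s := hs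
  simp only [mem_ofPred_eq, map_add]
  linarith [hA a ha]

variable {ι : Type*} {F : ι → Set E} {s : Set ι}

theorem biUnion_closure_add_SPos_eq_univ (h : ⨅ i ∈ s, scal z' (F i) = ⊥) :
    ⋃ i ∈ s, closure (F i + SPos z') = univ := by
  refine eq_univ_of_forall fun w => ?_
  have hlt : ⨅ i ∈ s, scal z' (F i) < z' w := h ▸ EReal.bot_lt_coe _
  simp only [iInf_lt_iff] at hlt
  obtain ⟨i, hi, hiw⟩ := hlt
  exact mem_biUnion hi (subset_closure (mem_add_SPos_of_scal_lt hiw))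

theorem closure_convexHull_biUnion_add_SPos_subset_setOf_le {m : ℝ}
    (hm : (m : EReal) ≤ ⨅ i ∈ s, scal z' (F i)) :
    closure (convexHull ℝ (⋃ i ∈ s, closure (F i + SPos z'))) ⊆ {w | m ≤ z' w} := by
  have hclosed : IsClosed {w | m ≤ z' w} := isClosed_le continuous_const z'.continuous
  refine closure_minimal (convexHull_min (iUnion₂_subset fun i hi => ?_)
    (convex_halfSpace_ge z'.isLinear m)) hclosed
  exact closure_add_SPos_subset_setOf_le
    (coe_le_scal_iff.mp (hm.trans (biInf_le (fun i => scal z' (F i)) hi)))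

end

theorem scalarized_problems_general
    (f : X → Set Z) (g : X → Set Y)
    (z' : Z →L[ℝ] ℝ) (hz0 : z' ≠ 0) :
    closure (convexHull ℝ (⋃ x ∈ {x : X | (0 : Y) ∈ g x}, closure (f x + SPos z'))) ≠ univ
      ↔ ⊥ < ⨅ x ∈ {x : X | (0 : Y) ∈ g x}, scal z' (f x) := by
  constructor
  · intro hne
    refine bot_lt_iff_ne_bot.mpr fun hbot => hne ?_
    rw [biUnion_closure_add_SPos_eq_univ hbot, convexHull_univ, closure_univ]
  · intro hbot huniv
    obtain ⟨m, -, hm⟩ := EReal.lt_iff_exists_real_btwn.mp hbot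
    have hsub := closure_convexHull_biUnion_add_SPos_subset_setOf_le hm.le
    exact z'.setOf_le_apply_ne_univ hz0 m (univ_subset_iff.mp (huniv ▸ hsub))

/-- **Scalarized problems.** For `f` with `f(x) = cl(f(x)+C)` for all `x`, any `g`, and
`z* ∈ C⁺∖{0}`, the following are equivalent:
(a) `cl co ⋃ {f(x) ⊕ S(z*) | 0 ∈ g(x)} ≠ Z`;
(b) `−∞ < inf {φ_{f,z*}(x) | 0 ∈ g(x)}`. -/
theorem scalarized_problems
    (C : Set Z) (hCconv : Convex ℝ C) (hCcone : ∀ t : ℝ, 0 < t → ∀ z ∈ C, t • z ∈ C)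
    (hC0 : (0 : Z) ∈ C)
    (f : X → Set Z) (g : X → Set Y)
    (hfF : ∀ x, f x = closure (f x + C))
    (z' : Z →L[ℝ] ℝ) (hz' : z' ∈ posDual C) (hz0 : z' ≠ 0) :
    closure (convexHull ℝ (⋃ x ∈ {x : X | (0 : Y) ∈ g x}, closure (f x + SPos z'))) ≠ univ
      ↔ ⊥ < ⨅ x ∈ {x : X | (0 : Y) ∈ g x}, scal z' (f x) :=
  scalarized_problems_general f g z' hz0
end
end

section
/- (Weak duality.) For every x ∈ X with 0 ∈ g(x) and every (y*,z*) ∈ Y*×(C+∖{0}): (a) h(y*,z*) ⊇ f(x) ⊕ S(z*), and (b) φ_{h,z*}(y*) ≤ φ_{f,z*}(x), i.e. inf{z*(z) : z ∈ h(y*,z*)} ≤ inf{z*(z) : z ∈ f(x)}. -/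
open Set Pointwise Topology Filter

noncomputable section

variable {X Y Z : Type*}
  [AddCommGroup X] [Module ℝ X] [TopologicalSpace X] [IsTopologicalAddGroup X]
  [ContinuousSMul ℝ X] [LocallyConvexSpace ℝ X]
  [AddCommGroup Y] [Module ℝ Y] [TopologicalSpace Y] [IsTopologicalAddGroup Y]
  [ContinuousSMul ℝ Y] [LocallyConvexSpace ℝ Y]
  [AddCommGroup Z] [Module ℝ Z] [TopologicalSpace Z] [IsTopologicalAddGroup Z]
  [ContinuousSMul ℝ Z] [LocallyConvexSpace ℝ Z]

section

variable {E F G : Type*} [AddCommGroup F] [Module ℝ F] [TopologicalSpace F]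
  [AddCommGroup G] [Module ℝ G] [TopologicalSpace G]

theorem SMap_zero (y' : F →L[ℝ] ℝ) (z' : G →L[ℝ] ℝ) : SMap y' z' 0 = SPos z' := by
  ext z
  simp [SMap, SPos]

theorem closure_add_SPos_subset_lag {f : E → Set G} {g : E → Set F} {x : E} (hx : (0 : F) ∈ g x)
    (y' : F →L[ℝ] ℝ) (z' : G →L[ℝ] ℝ) : closure (f x + SPos z') ⊆ lag f g x y' z' := by
  refine closure_mono (add_subset_add_left ?_)
  rw [← SMap_zero y' z']
  exact (subset_biUnion_of_mem (u := SMap y' z') hx).trans subset_closure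

theorem lag_subset_dualObj (f : E → Set G) (g : E → Set F) (x : E) (y' : F →L[ℝ] ℝ)
    (z' : G →L[ℝ] ℝ) : lag f g x y' z' ⊆ dualObj f g y' z' :=
  (subset_iUnion (fun x => lag f g x y' z') x).trans subset_closure

theorem subset_closure_add_SPos (A : Set G) (z' : G →L[ℝ] ℝ) : A ⊆ closure (A + SPos z') :=
  (subset_add_left A (by simp [SPos])).trans subset_closure

theorem scal_antitone (z' : G →L[ℝ] ℝ) : Antitone (scal z') :=
  fun _ _ h => biInf_mono h

end

theorem weak_duality_general
    (f : X → Set Z) (g : X → Set Y)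
    (x : X) (hx : (0 : Y) ∈ g x)
    (y' : Y →L[ℝ] ℝ) (z' : Z →L[ℝ] ℝ) :
    closure (f x + SPos z') ⊆ dualObj f g y' z' ∧
    scal z' (dualObj f g y' z') ≤ scal z' (f x) := by
  have hsub : closure (f x + SPos z') ⊆ dualObj f g y' z' :=
    (closure_add_SPos_subset_lag hx y' z').trans (lag_subset_dualObj f g x y' z')
  exact ⟨hsub, scal_antitone z' ((subset_closure_add_SPos (f x) z').trans hsub)⟩

/-- **Weak duality.** For every `x` with `0 ∈ g(x)` and every `(y*,z*) ∈ Y* × (C⁺∖{0})`: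
(a) `h(y*,z*) ⊇ f(x) ⊕ S(z*)`, and (b) `φ_{h,z*}(y*) ≤ φ_{f,z*}(x)`. -/
theorem weak_duality
    (C : Set Z) (hCconv : Convex ℝ C) (hCcone : ∀ t : ℝ, 0 < t → ∀ z ∈ C, t • z ∈ C)
    (hC0 : (0 : Z) ∈ C)
    (D : Set Y) (hDconv : Convex ℝ D) (hDcone : ∀ t : ℝ, 0 < t → ∀ y ∈ D, t • y ∈ D)
    (hD0 : (0 : Y) ∈ D)
    (f : X → Set Z) (g : X → Set Y)
    (hfF : ∀ x, f x = closure (f x + C))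
    (hgF : ∀ x, g x = closure (g x + D))
    (x : X) (hx : (0 : Y) ∈ g x)
    (y' : Y →L[ℝ] ℝ) (z' : Z →L[ℝ] ℝ) (hz' : z' ∈ posDual C) (hz0 : z' ≠ 0) :
    closure (f x + SPos z') ⊆ dualObj f g y' z' ∧
    scal z' (dualObj f g y' z') ≤ scal z' (f x) :=
  weak_duality_general f g x hx y' z'
end
end

section
/- (Scalarization and transition to value functions commute.) For every y ∈ Y and every z* ∈ C+∖{0}: φ_{v,z*}(y) = inf{φ_{f,z*}(x) : x ∈ X, y ∈ g(x)}, i.e. inf{z*(z) : z ∈ v(y)} = inf{φ_{f,z*}(x) : x ∈ X, y ∈ g(x)}. -/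
open Set Pointwise Topology Filter

noncomputable section

variable {X Y Z : Type*}
  [AddCommGroup X] [Module ℝ X] [TopologicalSpace X] [IsTopologicalAddGroup X]
  [ContinuousSMul ℝ X] [LocallyConvexSpace ℝ X]
  [AddCommGroup Y] [Module ℝ Y] [TopologicalSpace Y] [IsTopologicalAddGroup Y]
  [ContinuousSMul ℝ Y] [LocallyConvexSpace ℝ Y]
  [AddCommGroup Z] [Module ℝ Z] [TopologicalSpace Z] [IsTopologicalAddGroup Z]
  [ContinuousSMul ℝ Z] [LocallyConvexSpace ℝ Z]

theorem Continuous.biInf_closure {α β : Type*} [TopologicalSpace α] [CompleteLattice β]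
    [TopologicalSpace β] [ClosedIciTopology β] {φ : α → β} (hφ : Continuous φ) (s : Set α) :
    ⨅ x ∈ closure s, φ x = ⨅ x ∈ s, φ x := by
  refine le_antisymm (biInf_mono fun _ hx => subset_closure hx) (le_iInf₂ fun x hx => ?_)
  have hsub : s ⊆ φ ⁻¹' Ici (⨅ x ∈ s, φ x) := fun x hx => biInf_le φ hx
  exact closure_minimal hsub (isClosed_Ici.preimage hφ) hx

omit [IsTopologicalAddGroup Z] [ContinuousSMul ℝ Z] [LocallyConvexSpace ℝ Z] in
theorem scal_closure (z' : Z →L[ℝ] ℝ) (S : Set Z) : scal z' (closure S) = scal z' S :=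
  (continuous_coe_real_ereal.comp z'.continuous).biInf_closure S

omit [IsTopologicalAddGroup Z] [ContinuousSMul ℝ Z] [LocallyConvexSpace ℝ Z] in
theorem scal_biUnion {ι : Type*} (z' : Z →L[ℝ] ℝ) (p : Set ι) (s : ι → Set Z) :
    scal z' (⋃ i ∈ p, s i) = ⨅ i ∈ p, scal z' (s i) := by
  simp only [scal, iInf_iUnion]

theorem scalarization_value_function_commute_general
    (f : X → Set Z) (g : X → Set Y)
    (y : Y) (z' : Z →L[ℝ] ℝ) :
    scal z' (valFn f g y) = ⨅ x ∈ {x : X | y ∈ g x}, scal z' (f x) := by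
  rw [valFn, scal_closure, scal_biUnion]

/-- **Scalarization and transition to value functions commute.** For every `y ∈ Y` and
`z* ∈ C⁺∖{0}`: `φ_{v,z*}(y) = inf {φ_{f,z*}(x) | x ∈ X, y ∈ g(x)}`. -/
theorem scalarization_value_function_commute
    (C : Set Z) (hCconv : Convex ℝ C) (hCcone : ∀ t : ℝ, 0 < t → ∀ z ∈ C, t • z ∈ C)
    (hC0 : (0 : Z) ∈ C)
    (D : Set Y) (hDconv : Convex ℝ D) (hDcone : ∀ t : ℝ, 0 < t → ∀ y ∈ D, t • y ∈ D)
    (hD0 : (0 : Y) ∈ D)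
    (f : X → Set Z) (g : X → Set Y)
    (hfF : ∀ x, f x = closure (f x + C))
    (hgF : ∀ x, g x = closure (g x + D))
    (y : Y) (z' : Z →L[ℝ] ℝ) (hz' : z' ∈ posDual C) (hz0 : z' ≠ 0) :
    scal z' (valFn f g y) = ⨅ x ∈ {x : X | y ∈ g x}, scal z' (f x) :=
  scalarization_value_function_commute_general f g y z'
end
end

section
/- (Conjugate of the value function.) For every (y*,z*) ∈ Y*×(C+∖{0}): −v*(y*,z*) = cl(⋃_{x ∈ X} l(x,−y*,z*)), where −v*(y*,z*) = cl(⋃_{y ∈ Y} [v(y) + S_{(y*,z*)}(−y)]). Moreover, for the scalarized value function v_{z*}(y) = inf{φ_{f,z*}(x) : x ∈ X, y ∈ g(x)}, one has −(v_{z*})*(y*) = inf_{x ∈ X} λ_{z*}(x,−y*), where −(v_{z*})*(y*) = inf_{y ∈ Y} [v_{z*}(y) − y*(y)]. -/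
/-!
Both sides of the set-valued identity are the closure of the union of `f x + S_{(-y*,z*)}(y)`
over all pairs with `y ∈ g x`: the inner closures in `v` and `l` can be dropped because
`cl (cl A + B) = cl (A + B)`, `S_{(y*,z*)}(-y) = S_{(-y*,z*)}(y)`, and the two outer unions only
differ in the order in which `x` and `y` are taken. The scalar identity is the same interchange
of infima; the convention `(+∞) + (−∞) = +∞` is exactly what makes `λ_{z*}(x,-y*)` equal to
`inf_{y ∈ g x} (φ_{f,z*}(x) - y*(y))` also when `g x = ∅`.
-/

open Set Pointwise Topology Filter

noncomputable section

variable {X Y Z : Type*}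
  [AddCommGroup X] [Module ℝ X] [TopologicalSpace X] [IsTopologicalAddGroup X]
  [ContinuousSMul ℝ X] [LocallyConvexSpace ℝ X]
  [AddCommGroup Y] [Module ℝ Y] [TopologicalSpace Y] [IsTopologicalAddGroup Y]
  [ContinuousSMul ℝ Y] [LocallyConvexSpace ℝ Y]
  [AddCommGroup Z] [Module ℝ Z] [TopologicalSpace Z] [IsTopologicalAddGroup Z]
  [ContinuousSMul ℝ Z] [LocallyConvexSpace ℝ Z]

set_option linter.unusedSectionVars false

section ClosureLemmas

variable {M : Type*} [TopologicalSpace M] [Add M] [ContinuousAdd M]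

lemma closure_closure_add (A B : Set M) : closure (closure A + B) = closure (A + B) := by
  refine (closure_minimal ?_ isClosed_closure).antisymm
    (closure_mono (add_subset_add_right subset_closure))
  rintro _ ⟨a, ha, b, hb, rfl⟩
  exact map_mem_closure₂ continuous_add ha (subset_closure hb) fun a ha b hb ↦ add_mem_add ha hb

lemma closure_add_closure (A B : Set M) : closure (A + closure B) = closure (A + B) := by
  refine (closure_minimal ?_ isClosed_closure).antisymm
    (closure_mono (add_subset_add_left subset_closure))
  rintro _ ⟨a, ha, b, hb, rfl⟩
  exact map_mem_closure₂ continuous_add (subset_closure ha) hb fun a ha b hb ↦ add_mem_add ha hb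

end ClosureLemmas

lemma closure_iUnion_congr {T : Type*} [TopologicalSpace T] {ι : Sort*} {s t : ι → Set T}
    (h : ∀ i, closure (s i) = closure (t i)) :
    closure (⋃ i, s i) = closure (⋃ i, t i) := by
  have key : ∀ {s t : ι → Set T}, (∀ i, closure (s i) ⊆ closure (t i)) →
      closure (⋃ i, s i) ⊆ closure (⋃ i, t i) := fun hst ↦
    closure_minimal (iUnion_subset fun i ↦
      subset_closure.trans ((hst i).trans (closure_mono (subset_iUnion _ i)))) isClosed_closure
  exact (key fun i ↦ (h i).le).antisymm (key fun i ↦ (h i).ge)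

namespace EReal

lemma iInf_add_coe {ι : Sort*} (F : ι → EReal) (r : ℝ) :
    (⨅ i, F i) + r = ⨅ i, (F i + r) := by
  refine (le_iInf fun i ↦ add_le_add_left (iInf_le _ i) _).antisymm ?_
  rw [← sub_le_iff_le_add (.inl (coe_ne_bot r)) (.inl (coe_ne_top r))]
  exact le_iInf fun i ↦ (sub_le_sub (iInf_le _ i) le_rfl).trans_eq add_sub_cancel_right

lemma coe_add_iInf {ι : Sort*} (F : ι → EReal) (r : ℝ) :
    r + ⨅ i, F i = ⨅ i, (r + F i) := by
  simp only [add_comm (r : EReal), iInf_add_coe]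

lemma iInf_sub_coe {ι : Sort*} (F : ι → EReal) (r : ℝ) :
    (⨅ i, F i) - r = ⨅ i, (F i - r) := by
  simpa only [sub_eq_add_neg, ← coe_neg] using iInf_add_coe F (-r)

end EReal

lemma eadd_biInf_coe {ι : Type*} (a : EReal) (s : Set ι) (r : ι → ℝ) :
    eadd a (⨅ i ∈ s, (r i : EReal)) = ⨅ i ∈ s, (a + r i) := by
  rcases s.eq_empty_or_nonempty with rfl | ⟨i₀, hi₀⟩
  · simp [eadd]
  by_cases ha_top : a = ⊤
  · simp [eadd, ha_top]
  have hinf_ne_top : (⨅ i ∈ s, (r i : EReal)) ≠ ⊤ :=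
    ne_top_of_le_ne_top (EReal.coe_ne_top (r i₀)) (iInf₂_le i₀ hi₀)
  rw [eadd, if_neg (not_or.2 ⟨ha_top, hinf_ne_top⟩)]
  by_cases ha_bot : a = ⊥
  · subst ha_bot
    exact (EReal.bot_add _).trans (eq_bot_iff.2 (iInf₂_le_of_le i₀ hi₀ (EReal.bot_add _).le)).symm
  lift a to ℝ using ⟨ha_top, ha_bot⟩
  simp only [EReal.coe_add_iInf]

lemma SMap_apply_neg (y' : Y →L[ℝ] ℝ) (z' : Z →L[ℝ] ℝ) (y : Y) :
    SMap y' z' (-y) = SMap (-y') z' y := by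
  ext z
  simp [SMap]

lemma closure_valFn_add (f : X → Set Z) (g : X → Set Y) (y : Y) (S : Set Z) :
    closure (valFn f g y + S) = closure (⋃ x ∈ {x | y ∈ g x}, (f x + S)) := by
  rw [valFn, closure_closure_add, iUnion₂_add]

lemma closure_lag (f : X → Set Z) (g : X → Set Y) (x : X) (y' : Y →L[ℝ] ℝ) (z' : Z →L[ℝ] ℝ) :
    closure (lag f g x y' z') = closure (⋃ y ∈ g x, (f x + SMap y' z' y)) := by
  rw [lag, closure_closure, closure_add_closure, add_iUnion₂]

lemma eadd_scal (a : EReal) (y' : Y →L[ℝ] ℝ) (A : Set Y) :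
    eadd a (scal y' A) = ⨅ y ∈ A, (a + y' y) :=
  eadd_biInf_coe a A y'

theorem conjugate_of_value_function_general
    (f : X → Set Z) (g : X → Set Y)
    (y' : Y →L[ℝ] ℝ) (z' : Z →L[ℝ] ℝ) :
    closure (⋃ y : Y, (valFn f g y + SMap y' z' (-y)))
        = closure (⋃ x : X, lag f g x (-y') z') ∧
    (⨅ y : Y, ((⨅ x ∈ {x : X | y ∈ g x}, scal z' (f x)) - (y' y : EReal)))
        = ⨅ x : X, eadd (scal z' (f x)) (scal (-y') (g x)) := by
  constructor
  · have hv : ∀ y, closure (valFn f g y + SMap y' z' (-y)) =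
        closure (⋃ (x) (_ : y ∈ g x), (f x + SMap (-y') z' y)) := fun y ↦ by
      rw [SMap_apply_neg, closure_valFn_add]
      rfl
    rw [closure_iUnion_congr hv, closure_iUnion_congr fun x ↦ closure_lag f g x (-y') z',
      iUnion_comm]
  · simp only [eadd_scal, neg_apply, EReal.coe_neg, ← sub_eq_add_neg,
      EReal.iInf_sub_coe, mem_ofPred_eq]
    exact iInf_comm

/-- **Conjugate of the value function.** For every `(y*,z*) ∈ Y* × (C⁺∖{0})`:
`−v*(y*,z*) = cl ⋃_{y} [v(y) + S_{(y*,z*)}(−y)] = cl ⋃_x l(x,−y*,z*)`; and for the scalarized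
value function `v_{z*}(y) = inf {φ_{f,z*}(x) | y ∈ g(x)}` one has
`−(v_{z*})*(y*) = inf_y [v_{z*}(y) − y*(y)] = inf_x λ_{z*}(x,−y*)`. -/
theorem conjugate_of_value_function
    (C : Set Z) (hCconv : Convex ℝ C) (hCcone : ∀ t : ℝ, 0 < t → ∀ z ∈ C, t • z ∈ C)
    (hC0 : (0 : Z) ∈ C)
    (D : Set Y) (hDconv : Convex ℝ D) (hDcone : ∀ t : ℝ, 0 < t → ∀ y ∈ D, t • y ∈ D)
    (hD0 : (0 : Y) ∈ D)
    (f : X → Set Z) (g : X → Set Y)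
    (hfF : ∀ x, f x = closure (f x + C))
    (hgF : ∀ x, g x = closure (g x + D))
    (y' : Y →L[ℝ] ℝ) (z' : Z →L[ℝ] ℝ) (hz' : z' ∈ posDual C) (hz0 : z' ≠ 0) :
    closure (⋃ y : Y, (valFn f g y + SMap y' z' (-y)))
        = closure (⋃ x : X, lag f g x (-y') z') ∧
    (⨅ y : Y, ((⨅ x ∈ {x : X | y ∈ g x}, scal z' (f x)) - (y' y : EReal)))
        = ⨅ x : X, eadd (scal z' (f x)) (scal (-y') (g x)) :=
  conjugate_of_value_function_general f g y' z'
end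
end

section
/- (Dual optimal value as biconjugate.) v**(0) = d, where v**(y) = ⋂_{(y*,z*) ∈ Y*×(C+∖{0})} [−v*(y*,z*) + S_{(y*,z*)}(y)] is the biconjugate of the value function and d = ⋂_{(y*,z*) ∈ Y*×(C+∖{0})} h(y*,z*) is the optimal value of the dual problem. Moreover, for every z* ∈ C+∖{0}: (v_{z*})**(0) = d_{z*}, where (v_{z*})** is the classical scalar biconjugate of v_{z*}(y) = inf{φ_{f,z*}(x) : x ∈ X, y ∈ g(x)} and d_{z*} = sup_{y* ∈ Y*} inf_{x ∈ X} λ_{z*}(x,y*). -/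
/-
For each `(y*, z*)` the set `−v*(y*, z*) + S_{(y*,z*)}(0)` equals `h(−y*, z*)`: both are the closure
of `⋃_x ⋃_{y ∈ g(x)} (f(x) + S_{(y*,z*)}(−y))`, since closures may be taken inside and outside of
Minkowski sums and unions freely, and the halfspace `S_{(y*,z*)}(0)` is absorbed by this set.
Replacing `y*` by `−y*` in the intersection gives `v**(0) = d`. The scalar identity is the same
computation on infima, `−(v_{z*})*(−y*) = inf_x [φ_{f,z*}(x) + inf_{y ∈ g(x)} y*(y)]`; the convention
`(+∞) + (−∞) = +∞` is exactly what an empty `g(x)` contributes to the left-hand side.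
-/

open Set Pointwise Topology Filter

noncomputable section

variable {X Y Z : Type*}
  [AddCommGroup X] [Module ℝ X] [TopologicalSpace X] [IsTopologicalAddGroup X]
  [ContinuousSMul ℝ X] [LocallyConvexSpace ℝ X]
  [AddCommGroup Y] [Module ℝ Y] [TopologicalSpace Y] [IsTopologicalAddGroup Y]
  [ContinuousSMul ℝ Y] [LocallyConvexSpace ℝ Y]
  [AddCommGroup Z] [Module ℝ Z] [TopologicalSpace Z] [IsTopologicalAddGroup Z]
  [ContinuousSMul ℝ Z] [LocallyConvexSpace ℝ Z]

section ClosureAdd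

variable {M : Type*} [TopologicalSpace M]

lemma closure_add_closure_subset [Add M] [ContinuousAdd M] (s t : Set M) :
    closure s + closure t ⊆ closure (s + t) := by
  rintro _ ⟨a, ha, b, hb, rfl⟩
  exact map_mem_closure₂ continuous_add ha hb fun a ha b hb => add_mem_add ha hb

lemma closure_add_closure_right [Add M] [ContinuousAdd M] (s t : Set M) :
    closure (s + closure t) = closure (s + t) := by
  refine (closure_mono (add_subset_add_left subset_closure)).antisymm' ?_
  refine closure_minimal ?_ isClosed_closure
  exact (add_subset_add_right subset_closure).trans (closure_add_closure_subset s t)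

lemma closure_closure_add_s12 [Add M] [ContinuousAdd M] (s t : Set M) :
    closure (closure s + t) = closure (s + t) := by
  refine (closure_mono (add_subset_add_right subset_closure)).antisymm' ?_
  refine closure_minimal ?_ isClosed_closure
  exact (add_subset_add_left subset_closure).trans (closure_add_closure_subset s t)

lemma closure_iUnion_closure_eq {ι : Sort*} (s : ι → Set M) :
    closure (⋃ i, closure (s i)) = closure (⋃ i, s i) :=
  (closure_mono (iUnion_mono fun _ => subset_closure)).antisymm'
    (closure_minimal (iUnion_subset fun i => closure_mono (subset_iUnion s i)) isClosed_closure)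

lemma closure_add_eq_closure_of_add_subset [AddZeroClass M] [ContinuousAdd M] {U K : Set M}
    (hK : (0 : M) ∈ K) (hUK : U + K ⊆ U) : closure U + K = closure U := by
  refine Subset.antisymm ?_ fun u hu => ⟨u, hu, 0, hK, add_zero u⟩
  calc closure U + K ⊆ closure U + closure K := add_subset_add_left subset_closure
    _ ⊆ closure (U + K) := closure_add_closure_subset U K
    _ ⊆ closure U := closure_mono hUK

end ClosureAdd

lemma closure_iUnion_valFn_add {α E F : Type*} [TopologicalSpace F] [Add F] [ContinuousAdd F]
    (f : α → Set F) (g : α → Set E) (K : E → Set F) :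
    closure (⋃ y, valFn f g y + K y) = closure (⋃ x, ⋃ y ∈ g x, f x + K y) := by
  calc closure (⋃ y, valFn f g y + K y)
      = closure (⋃ y, closure (valFn f g y + K y)) := (closure_iUnion_closure_eq _).symm
    _ = closure (⋃ y, ⋃ x ∈ {x | y ∈ g x}, f x + K y) := by
        simp_rw [valFn, closure_closure_add_s12, iUnion_add, closure_iUnion_closure_eq]
    _ = closure (⋃ x, ⋃ y ∈ g x, f x + K y) := by
        rw [iUnion_comm]
        simp only [mem_ofPred_eq]

section SetValued

variable {α E F : Type*} [AddCommGroup E] [Module ℝ E] [TopologicalSpace E]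
  [AddCommGroup F] [Module ℝ F] [TopologicalSpace F]

lemma SMap_neg_left (y' : E →L[ℝ] ℝ) (z' : F →L[ℝ] ℝ) (y : E) :
    SMap (-y') z' y = SMap y' z' (-y) := by
  ext z
  simp [SMap]

lemma zero_mem_SMap_zero (y' : E →L[ℝ] ℝ) (z' : F →L[ℝ] ℝ) : (0 : F) ∈ SMap y' z' 0 := by
  simp [SMap]

lemma SMap_add_SMap_zero_subset (y' : E →L[ℝ] ℝ) (z' : F →L[ℝ] ℝ) (y : E) :
    SMap y' z' y + SMap y' z' 0 ⊆ SMap y' z' y := by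
  rintro _ ⟨a, ha, b, hb, rfl⟩
  simp only [SMap, mem_ofPred_eq, map_zero, map_add] at ha hb ⊢
  linarith

variable [IsTopologicalAddGroup F]

lemma lag_eq_closure_iUnion (f : α → Set F) (g : α → Set E) (x : α) (y' : E →L[ℝ] ℝ)
    (z' : F →L[ℝ] ℝ) : lag f g x y' z' = closure (⋃ y ∈ g x, f x + SMap y' z' y) := by
  rw [lag, closure_add_closure_right, add_iUnion₂]

lemma dualObj_eq_closure_iUnion (f : α → Set F) (g : α → Set E) (y' : E →L[ℝ] ℝ)
    (z' : F →L[ℝ] ℝ) :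
    dualObj f g y' z' = closure (⋃ x, ⋃ y ∈ g x, f x + SMap y' z' y) := by
  simp_rw [dualObj, lag_eq_closure_iUnion, closure_iUnion_closure_eq]

lemma negConj_add_SMap_zero_eq_dualObj_neg (f : α → Set F) (g : α → Set E)
    (y' : E →L[ℝ] ℝ) (z' : F →L[ℝ] ℝ) :
    closure (⋃ y, valFn f g y + SMap y' z' (-y)) + SMap y' z' 0 = dualObj f g (-y') z' := by
  rw [closure_iUnion_valFn_add, dualObj_eq_closure_iUnion, closure_add_eq_closure_of_add_subset
    (zero_mem_SMap_zero y' z')]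
  · simp_rw [SMap_neg_left]
  · simp_rw [iUnion_add, add_assoc]
    exact iUnion_mono fun x => iUnion₂_mono fun y _ =>
      add_subset_add_left (SMap_add_SMap_zero_subset y' z' (-y))

end SetValued

lemma EReal.coe_add_iInf_s12 {ι : Sort*} (r : ℝ) (u : ι → EReal) :
    (r : EReal) + ⨅ i, u i = ⨅ i, ((r : EReal) + u i) := by
  have cancel : ∀ a : EReal, ((-r : ℝ) : EReal) + (r + a) = a := fun a => by
    rw [← add_assoc, ← EReal.coe_add, neg_add_cancel, EReal.coe_zero, zero_add]
  refine le_antisymm (le_iInf fun i => add_le_add_right (iInf_le u i) _) ?_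
  calc ⨅ i, ((r : EReal) + u i)
      = (r : EReal) + (((-r : ℝ) : EReal) + ⨅ i, ((r : EReal) + u i)) := by
        rw [← add_assoc, ← EReal.coe_add, add_neg_cancel, EReal.coe_zero, zero_add]
    _ ≤ (r : EReal) + ⨅ i, u i :=
        add_le_add_right (le_iInf fun i => (add_le_add_right (iInf_le _ i) _).trans (cancel _).le) _

lemma EReal.neg_iSup {ι : Sort*} (u : ι → EReal) : -⨆ i, u i = ⨅ i, -u i :=
  EReal.negOrderIso.map_iSup u

lemma biInf_coe_add_eq_eadd {ι : Type*} (s : Set ι) (w : ι → ℝ) (c : EReal) :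
    ⨅ i ∈ s, ((w i : EReal) + c) = eadd c (⨅ i ∈ s, (w i : EReal)) := by
  rcases s.eq_empty_or_nonempty with rfl | ⟨i₀, hi₀⟩
  · simp [eadd]
  have hne : (⨅ i ∈ s, (w i : EReal)) ≠ ⊤ :=
    ne_top_of_le_ne_top (EReal.coe_ne_top (w i₀)) (iInf₂_le i₀ hi₀)
  induction c with
  | top => simp [eadd, EReal.add_top_of_ne_bot]
  | bot =>
    rw [eadd, if_neg (by simp [hne]), EReal.bot_add]
    exact eq_bot_mono (iInf₂_le i₀ hi₀) (EReal.add_bot _)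
  | coe r =>
    rw [eadd, if_neg (by simp [hne]), EReal.coe_add_iInf_s12]
    simp_rw [EReal.coe_add_iInf_s12, add_comm]

lemma neg_iSup_neg_sub_biInf_eq_iInf_eadd {ι κ : Type*} (φ : ι → EReal) (g : ι → Set κ)
    (w : κ → ℝ) :
    -(⨆ y, (-(w y : EReal) - ⨅ x ∈ {x | y ∈ g x}, φ x)) =
      ⨅ x, eadd (φ x) (⨅ y ∈ g x, (w y : EReal)) := by
  have neg_term : ∀ y, -(-(w y : EReal) - ⨅ x ∈ {x | y ∈ g x}, φ x) =
      ⨅ x, ⨅ (_ : y ∈ g x), ((w y : EReal) + φ x) := fun y => by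
    rw [EReal.neg_sub (by simp) (by simp), neg_neg]
    simp_rw [EReal.coe_add_iInf_s12, mem_ofPred_eq]
  calc -(⨆ y, (-(w y : EReal) - ⨅ x ∈ {x | y ∈ g x}, φ x))
      = ⨅ y, ⨅ x, ⨅ (_ : y ∈ g x), ((w y : EReal) + φ x) := by
        simp_rw [EReal.neg_iSup, neg_term]
    _ = ⨅ x, ⨅ y ∈ g x, ((w y : EReal) + φ x) := iInf_comm
    _ = ⨅ x, eadd (φ x) (⨅ y ∈ g x, (w y : EReal)) := by
        simp_rw [biInf_coe_add_eq_eadd]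

theorem dual_value_as_biconjugate_general
    (C : Set Z)
    (f : X → Set Z) (g : X → Set Y) :
    (⋂ (y' : Y →L[ℝ] ℝ), ⋂ z' ∈ posDual C \ {0},
        (closure (⋃ y : Y, (valFn f g y + SMap y' z' (-y))) + SMap y' z' (0 : Y)))
      = (⋂ (y' : Y →L[ℝ] ℝ), ⋂ z' ∈ posDual C \ {0}, dualObj f g y' z') ∧
    ∀ z' ∈ posDual C \ {0},
      (⨆ y' : Y →L[ℝ] ℝ, ((y' (0 : Y) : EReal) -
          ⨆ y : Y, ((y' y : EReal) - ⨅ x ∈ {x : X | y ∈ g x}, scal z' (f x))))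
        = ⨆ y' : Y →L[ℝ] ℝ, ⨅ x : X, eadd (scal z' (f x)) (scal y' (g x)) := by
  constructor
  · simp_rw [negConj_add_SMap_zero_eq_dualObj_neg]
    exact (Equiv.neg (Y →L[ℝ] ℝ)).iInf_comp
      (g := fun y' => ⋂ z' ∈ posDual C \ {0}, dualObj f g y' z')
  · intro z' _
    rw [← (Equiv.neg (Y →L[ℝ] ℝ)).iSup_comp]
    refine iSup_congr fun y' => ?_
    simp only [Equiv.neg_apply, neg_apply, map_zero, EReal.coe_zero, zero_sub]
    exact neg_iSup_neg_sub_biInf_eq_iInf_eadd (fun x => scal z' (f x)) g y'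

/-- **Dual optimal value as biconjugate.** `v**(0) = d`, where
`v**(y) = ⋂_{(y*,z*) ∈ Y*×(C⁺∖{0})} [−v*(y*,z*) + S_{(y*,z*)}(y)]` and
`d = ⋂_{(y*,z*) ∈ Y*×(C⁺∖{0})} h(y*,z*)`. Moreover, for every `z* ∈ C⁺∖{0}`,
`(v_{z*})**(0) = d_{z*}`, with the classical scalar biconjugate
`(v_{z*})**(y) = sup_{y*} [y*(y) − sup_{y'} (y*(y') − v_{z*}(y'))]` and
`d_{z*} = sup_{y*} inf_x λ_{z*}(x,y*)`. -/
theorem dual_value_as_biconjugate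
    (C : Set Z) (hCconv : Convex ℝ C) (hCcone : ∀ t : ℝ, 0 < t → ∀ z ∈ C, t • z ∈ C)
    (hC0 : (0 : Z) ∈ C)
    (D : Set Y) (hDconv : Convex ℝ D) (hDcone : ∀ t : ℝ, 0 < t → ∀ y ∈ D, t • y ∈ D)
    (hD0 : (0 : Y) ∈ D)
    (f : X → Set Z) (g : X → Set Y)
    (hfF : ∀ x, f x = closure (f x + C))
    (hgF : ∀ x, g x = closure (g x + D)) :
    (⋂ (y' : Y →L[ℝ] ℝ), ⋂ z' ∈ posDual C \ {0},
        (closure (⋃ y : Y, (valFn f g y + SMap y' z' (-y))) + SMap y' z' (0 : Y)))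
      = (⋂ (y' : Y →L[ℝ] ℝ), ⋂ z' ∈ posDual C \ {0}, dualObj f g y' z') ∧
    ∀ z' ∈ posDual C \ {0},
      (⨆ y' : Y →L[ℝ] ℝ, ((y' (0 : Y) : EReal) -
          ⨆ y : Y, ((y' y : EReal) - ⨅ x ∈ {x : X | y ∈ g x}, scal z' (f x))))
        = ⨆ y' : Y →L[ℝ] ℝ, ⨅ x : X, eadd (scal z' (f x)) (scal y' (g x)) :=
  dual_value_as_biconjugate_general C f g
end
end

section
/- (Strong duality.) Let f and g be convex (i.e. their graphs are convex) and assume the Slater condition: there exists x̄ ∈ X with f(x̄) ≠ ∅ and g(x̄) ∩ (−int D) ≠ ∅. Then strong duality holds: p = d, and for every z* ∈ C+∖{0}: p_{z*} = d_{z*}. -/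
open Set Pointwise Topology Filter

noncomputable section

variable {X Y Z : Type*}
  [AddCommGroup X] [Module ℝ X] [TopologicalSpace X] [IsTopologicalAddGroup X]
  [ContinuousSMul ℝ X] [LocallyConvexSpace ℝ X]
  [AddCommGroup Y] [Module ℝ Y] [TopologicalSpace Y] [IsTopologicalAddGroup Y]
  [ContinuousSMul ℝ Y] [LocallyConvexSpace ℝ Y]
  [AddCommGroup Z] [Module ℝ Z] [TopologicalSpace Z] [IsTopologicalAddGroup Z]
  [ContinuousSMul ℝ Z] [LocallyConvexSpace ℝ Z]

/-!
A real lower bound `ρ` of `z*` on the feasible values yields a Lagrange multiplier `y*` with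
`ρ ≤ z*(z) + y*(w)` for all `z ∈ f x`, `w ∈ g x`: separate `(0, ρ)` from the open convex set
`{(w, z*(z)) | z ∈ f x, w ∈ g x} + int D × (0, ∞)` in `Y × ℝ`; the Slater point puts `(0, s)` in
that set for large `s`, so the separating functional is not vertical. Applied to every `ρ < p_{z*}`
this gives `p_{z*} ≤ d_{z*}`. For `d ⊆ p`, separate a point outside `p` from the closed convex set
`p` by some `z*`; since `p + C ⊆ p` and `z*` is bounded below on `p`, `z* ∈ C⁺`, and the multiplier
for `z*` keeps `h(y*,z*)` in the same half-space as `p`. The reverse inequalities are weak duality.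
-/

theorem subset_closure_add_of_zero_mem_closure {G : Type*} [AddZeroClass G] [TopologicalSpace G]
    [ContinuousAdd G] {s t : Set G} (ht : (0 : G) ∈ closure t) : s ⊆ closure (s + t) :=
  fun p hp => by
    simpa using map_mem_closure₂ continuous_add (subset_closure hp) ht
      fun a ha b hb => add_mem_add ha hb

theorem exists_lt_add_of_isOpen_of_convex {E : Type*} [AddCommGroup E] [Module ℝ E]
    [TopologicalSpace E] [IsTopologicalAddGroup E] [ContinuousSMul ℝ E]
    {A : Set (E × ℝ)} (hAo : IsOpen A) (hAc : Convex ℝ A) {ρ s : ℝ}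
    (hρ : ((0 : E), ρ) ∉ A) (hs : ((0 : E), s) ∈ A) (hρs : ρ < s) :
    ∃ φ : E →L[ℝ] ℝ, ∀ q ∈ A, ρ < q.2 + φ q.1 := by
  obtain ⟨L, hL⟩ := geometric_hahn_banach_open_point hAc hAo hρ
  set c := L ((0 : E), (1 : ℝ))
  have hsplit : ∀ q : E × ℝ, L q = L (q.1, 0) + q.2 * c := fun q => by
    rw [← smul_eq_mul, ← map_smul, ← map_add]
    simp
  have hvert : ∀ r : ℝ, L ((0 : E), r) = r * c := fun r => by
    simpa only [Prod.mk_zero_zero, map_zero, zero_add] using hsplit (0, r)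
  have hc : c < 0 := by
    have := hL _ hs
    rw [hvert, hvert] at this
    nlinarith
  refine ⟨c⁻¹ • L.comp (ContinuousLinearMap.inl ℝ E ℝ), fun q hq => ?_⟩
  have hq := hL q hq
  rw [hvert, hsplit] at hq
  have : ρ - q.2 < L (q.1, 0) / c := (lt_div_iff_of_neg hc).2 (by linarith)
  show ρ < q.2 + c⁻¹ * L (q.1, 0)
  rw [inv_mul_eq_div]
  linarith

theorem eadd_le_self {a b : EReal} (hb : b ≤ 0) : eadd a b ≤ a := by
  unfold eadd
  split_ifs with h
  · rcases h with h | h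
    · exact h.ge
    · exact absurd (h ▸ hb) (by simp)
  · simpa using add_le_add (le_refl a) hb

theorem exists_feasible_of_slater {X Y Z : Type*} [AddCommGroup Y] [TopologicalSpace Y]
    {f : X → Set Z} {g : X → Set Y} {D : Set Y} (hgD : ∀ x, g x + D ⊆ g x)
    (slater : ∃ x : X, (f x).Nonempty ∧ (g x ∩ (-(interior D))).Nonempty) :
    ∃ x, (f x).Nonempty ∧ (0 : Y) ∈ g x := by
  obtain ⟨x, hfx, w, hw, hwD⟩ := slater
  exact ⟨x, hfx, hgD x ⟨w, hw, -w, interior_subset hwD, add_neg_cancel w⟩⟩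

section ConvexProgram

variable {X Y Z : Type*} [AddCommGroup X] [Module ℝ X] [AddCommGroup Y] [Module ℝ Y]
  [AddCommGroup Z] [Module ℝ Z] [TopologicalSpace Z] {f : X → Set Z} {g : X → Set Y}

theorem mem_posDual_of_bddBelow {C P : Set Z}
    (hCcone : ∀ t : ℝ, 0 < t → ∀ z ∈ C, t • z ∈ C) (hPC : P + C ⊆ P) (hP : P.Nonempty)
    {z' : Z →L[ℝ] ℝ} (hbdd : BddBelow (z' '' P)) : z' ∈ posDual C := by
  intro c hc
  by_contra! hneg
  obtain ⟨p, hp⟩ := hP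
  obtain ⟨m, hm⟩ := hbdd
  set t := (z' p - m + 1) / -z' c
  have ht : 0 < t := div_pos (by linarith [hm ⟨p, hp, rfl⟩]) (neg_pos.2 hneg)
  have htc : t * z' c = -(z' p - m + 1) := by
    rw [div_mul_eq_mul_div, mul_div_assoc, div_neg, div_self hneg.ne]
    ring
  have := hm ⟨_, hPC (add_mem_add hp (hCcone t ht c hc)), rfl⟩
  rw [map_add, map_smul, smul_eq_mul, htc] at this
  linarith

def imageSpace (f : X → Set Z) (g : X → Set Y) (z' : Z →L[ℝ] ℝ) : Set (Y × ℝ) :=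
  {q | ∃ x, ∃ z ∈ f x, ∃ w ∈ g x, (w, z' z) = q}

theorem convex_imageSpace (hfconv : Convex ℝ {q : X × Z | q.2 ∈ f q.1})
    (hgconv : Convex ℝ {q : X × Y | q.2 ∈ g q.1}) (z' : Z →L[ℝ] ℝ) :
    Convex ℝ (imageSpace f g z') := by
  rintro _ ⟨x₁, z₁, hz₁, w₁, hw₁, rfl⟩ _ ⟨x₂, z₂, hz₂, w₂, hw₂, rfl⟩ a b ha hb hab
  refine ⟨a • x₁ + b • x₂, a • z₁ + b • z₂, ?_, a • w₁ + b • w₂, ?_, by simp⟩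
  · exact hfconv (x := (x₁, z₁)) (y := (x₂, z₂)) hz₁ hz₂ ha hb hab
  · exact hgconv (x := (x₁, w₁)) (y := (x₂, w₂)) hw₁ hw₂ ha hb hab

theorem convex_valFn [IsTopologicalAddGroup Z] [ContinuousSMul ℝ Z]
    (hfconv : Convex ℝ {q : X × Z | q.2 ∈ f q.1})
    (hgconv : Convex ℝ {q : X × Y | q.2 ∈ g q.1}) (y : Y) : Convex ℝ (valFn f g y) := by
  refine Convex.closure ?_
  intro p hp q hq a b ha hb hab
  rw [mem_iUnion₂] at hp hq ⊢
  obtain ⟨x₁, hx₁, hp⟩ := hp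
  obtain ⟨x₂, hx₂, hq⟩ := hq
  refine ⟨a • x₁ + b • x₂, ?_, hfconv (x := (x₁, p)) (y := (x₂, q)) hp hq ha hb hab⟩
  simpa [← add_smul, hab] using hgconv (x := (x₁, y)) (y := (x₂, y)) hx₁ hx₂ ha hb hab

theorem exists_lagrange_multiplier [TopologicalSpace Y] [IsTopologicalAddGroup Y]
    [ContinuousSMul ℝ Y] {D : Set Y} (hDconv : Convex ℝ D) (hD0 : (0 : Y) ∈ D)
    (hgD : ∀ x, g x + D ⊆ g x)
    (hfconv : Convex ℝ {q : X × Z | q.2 ∈ f q.1})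
    (hgconv : Convex ℝ {q : X × Y | q.2 ∈ g q.1})
    (slater : ∃ x : X, (f x).Nonempty ∧ (g x ∩ (-(interior D))).Nonempty)
    (z' : Z →L[ℝ] ℝ) {ρ : ℝ} (hρ : ∀ x, (0 : Y) ∈ g x → ∀ z ∈ f x, ρ ≤ z' z) :
    ∃ y' : Y →L[ℝ] ℝ, ∀ x, ∀ z ∈ f x, ∀ w ∈ g x, ρ ≤ z' z + y' w := by
  obtain ⟨xb, ⟨zb, hzb⟩, wb, hwb, hdb⟩ := slater
  rw [Set.mem_neg] at hdb
  set A := imageSpace f g z' + interior D ×ˢ Ioi (0 : ℝ)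
  have hAo : IsOpen A := (isOpen_interior.prod isOpen_Ioi).add_left
  have hAc : Convex ℝ A :=
    (convex_imageSpace hfconv hgconv z').add (hDconv.interior.prod (convex_Ioi 0))
  have hρA : ((0 : Y), ρ) ∉ A := by
    rintro ⟨_, ⟨x, z, hz, w, hw, rfl⟩, ⟨d, t⟩, ⟨hd, ht⟩, heq⟩
    simp only [Prod.mk_add_mk, Prod.mk.injEq] at heq
    have := hρ x (hgD x ⟨w, hw, d, interior_subset hd, heq.1⟩) z hz
    linarith [mem_Ioi.1 ht]
  have hsA : ((0 : Y), z' zb + 1) ∈ A :=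
    ⟨_, ⟨xb, zb, hzb, wb, hwb, rfl⟩, (-wb, 1), ⟨hdb, mem_Ioi.2 zero_lt_one⟩, by simp⟩
  have hρzb : ρ ≤ z' zb :=
    hρ xb (hgD xb ⟨wb, hwb, -wb, interior_subset hdb, add_neg_cancel wb⟩) zb hzb
  obtain ⟨φ, hφ⟩ := exists_lt_add_of_isOpen_of_convex hAo hAc hρA hsA (by linarith)
  have h0 : ((0 : Y), (0 : ℝ)) ∈ closure (interior D ×ˢ Ioi (0 : ℝ)) := by
    rw [closure_prod_eq, hDconv.closure_interior_eq_closure_of_nonempty_interior ⟨_, hdb⟩,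
      closure_Ioi]
    exact ⟨subset_closure hD0, self_mem_Ici⟩
  have hA : closure A ⊆ {q | ρ ≤ q.2 + φ q.1} :=
    closure_minimal (fun q hq => (hφ q hq).le) (isClosed_le continuous_const (by fun_prop))
  exact ⟨φ, fun x z hz w hw =>
    hA (subset_closure_add_of_zero_mem_closure h0 ⟨x, z, hz, w, hw, rfl⟩)⟩

end ConvexProgram

section Duality

variable {X Y Z : Type*} [AddCommGroup Y] [Module ℝ Y] [TopologicalSpace Y]
  [AddCommGroup Z] [Module ℝ Z] [TopologicalSpace Z] {f : X → Set Z} {g : X → Set Y}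

theorem coe_le_eadd_scal {A : Set Z} {B : Set Y} {z' : Z →L[ℝ] ℝ} {y' : Y →L[ℝ] ℝ} {ρ : ℝ}
    (h : ∀ z ∈ A, ∀ w ∈ B, ρ ≤ z' z + y' w) : (ρ : EReal) ≤ eadd (scal z' A) (scal y' B) := by
  unfold eadd
  split_ifs with htop
  · exact le_top
  rw [not_or] at htop
  refine EReal.le_add_of_forall_gt (.inr htop.2) (.inl htop.1) fun a ha b hb => ?_
  obtain ⟨z, hz, hza⟩ : ∃ z ∈ A, (z' z : EReal) < a := by simpa [scal, iInf_lt_iff] using ha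
  obtain ⟨w, hw, hwb⟩ : ∃ w ∈ B, (y' w : EReal) < b := by simpa [scal, iInf_lt_iff] using hb
  calc (ρ : EReal) ≤ ((z' z + y' w : ℝ) : EReal) := EReal.coe_le_coe_iff.2 (h z hz w hw)
    _ ≤ a + b := by rw [EReal.coe_add]; exact add_le_add hza.le hwb.le

theorem iInf_eadd_le_iInf_feasible (z' : Z →L[ℝ] ℝ) (y' : Y →L[ℝ] ℝ) :
    ⨅ x, eadd (scal z' (f x)) (scal y' (g x)) ≤ ⨅ x ∈ {x | (0 : Y) ∈ g x}, scal z' (f x) :=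
  le_iInf₂ fun x hx => (iInf_le _ x).trans <| eadd_le_self <|
    (show scal y' (g x) ≤ (y' 0 : EReal) from iInf₂_le 0 hx).trans_eq (by simp)

theorem iInf_feasible_eq_iSup_iInf_eadd [AddCommGroup X] [Module ℝ X] [IsTopologicalAddGroup Y]
    [ContinuousSMul ℝ Y] {D : Set Y} (hDconv : Convex ℝ D) (hD0 : (0 : Y) ∈ D)
    (hgD : ∀ x, g x + D ⊆ g x)
    (hfconv : Convex ℝ {q : X × Z | q.2 ∈ f q.1})
    (hgconv : Convex ℝ {q : X × Y | q.2 ∈ g q.1})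
    (slater : ∃ x : X, (f x).Nonempty ∧ (g x ∩ (-(interior D))).Nonempty) (z' : Z →L[ℝ] ℝ) :
    ⨅ x ∈ {x : X | (0 : Y) ∈ g x}, scal z' (f x)
      = ⨆ y' : Y →L[ℝ] ℝ, ⨅ x : X, eadd (scal z' (f x)) (scal y' (g x)) := by
  refine le_antisymm ?_ (iSup_le (iInf_eadd_le_iInf_feasible z'))
  refine le_of_forall_lt_imp_le_of_dense fun a ha => ?_
  obtain ⟨ρ, haρ, hρp⟩ := EReal.lt_iff_exists_real_btwn.1 ha
  have hρ : ∀ x, (0 : Y) ∈ g x → ∀ z ∈ f x, ρ ≤ z' z := fun x hx z hz =>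
    EReal.coe_le_coe_iff.1 (hρp.le.trans ((iInf₂_le x hx).trans (iInf₂_le z hz)))
  obtain ⟨y', hy'⟩ := exists_lagrange_multiplier hDconv hD0 hgD hfconv hgconv slater z' hρ
  exact haρ.le.trans (le_iSup_of_le y' (le_iInf fun x => coe_le_eadd_scal (hy' x)))

theorem valFn_zero_subset_dualObj (y' : Y →L[ℝ] ℝ) (z' : Z →L[ℝ] ℝ) :
    valFn f g 0 ⊆ dualObj f g y' z' :=
  closure_mono <| iUnion₂_subset fun x hx z hz => mem_iUnion_of_mem x <| subset_closure
    ⟨z, hz, 0, subset_closure (mem_iUnion₂_of_mem hx (by simp [SMap])), add_zero z⟩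

theorem dualObj_subset_of_forall_le {y' : Y →L[ℝ] ℝ} {z' : Z →L[ℝ] ℝ} {ρ : ℝ}
    (h : ∀ x, ∀ z ∈ f x, ∀ w ∈ g x, ρ ≤ z' z + y' w) : dualObj f g y' z' ⊆ {v | ρ ≤ z' v} := by
  have hclosed : ∀ r, IsClosed {v : Z | r ≤ z' v} := fun r =>
    isClosed_le continuous_const z'.continuous
  refine closure_minimal (iUnion_subset fun x => closure_minimal ?_ (hclosed ρ)) (hclosed ρ)
  rintro _ ⟨z, hz, s, hs, rfl⟩
  have hs' : ρ - z' z ≤ z' s := closure_minimal (iUnion₂_subset fun w hw s' (hws : y' w ≤ z' s') =>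
    show ρ - z' z ≤ z' s' by linarith [h x z hz w hw]) (hclosed _) hs
  show ρ ≤ z' (z + s)
  rw [map_add]
  linarith

theorem iInter_dualObj_subset_valFn [AddCommGroup X] [Module ℝ X] [IsTopologicalAddGroup Y]
    [ContinuousSMul ℝ Y] [IsTopologicalAddGroup Z] [ContinuousSMul ℝ Z]
    [LocallyConvexSpace ℝ Z] {C : Set Z} (hCcone : ∀ t : ℝ, 0 < t → ∀ z ∈ C, t • z ∈ C)
    (hfC : ∀ x, f x + C ⊆ f x) {D : Set Y} (hDconv : Convex ℝ D) (hD0 : (0 : Y) ∈ D)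
    (hgD : ∀ x, g x + D ⊆ g x)
    (hfconv : Convex ℝ {q : X × Z | q.2 ∈ f q.1})
    (hgconv : Convex ℝ {q : X × Y | q.2 ∈ g q.1})
    (slater : ∃ x : X, (f x).Nonempty ∧ (g x ∩ (-(interior D))).Nonempty) :
    ⋂ (y' : Y →L[ℝ] ℝ), ⋂ z' ∈ posDual C \ {0}, dualObj f g y' z' ⊆ valFn f g 0 := by
  intro z₀ hz₀
  by_contra hz₀p
  obtain ⟨z', u, hz₀u, hu⟩ :=
    geometric_hahn_banach_point_closed (convex_valFn hfconv hgconv 0) isClosed_closure hz₀p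
  set P := ⋃ x ∈ {x | (0 : Y) ∈ g x}, f x
  have huP : ∀ z ∈ P, u ≤ z' z := fun z hz => (hu z (subset_closure hz)).le
  obtain ⟨xb, ⟨zb, hzb⟩, hxb⟩ := exists_feasible_of_slater hgD slater
  have hzbP : zb ∈ P := mem_iUnion₂_of_mem hxb hzb
  have hPC : P + C ⊆ P := by
    rintro _ ⟨z, hz, c, hc, rfl⟩
    obtain ⟨x, hx, hz⟩ := mem_iUnion₂.1 hz
    exact mem_iUnion₂_of_mem hx (hfC x (add_mem_add hz hc))
  have hpos : z' ∈ posDual C :=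
    mem_posDual_of_bddBelow hCcone hPC ⟨zb, hzbP⟩ ⟨u, forall_mem_image.2 huP⟩
  have hne : z' ≠ 0 := by
    rintro rfl
    have := huP zb hzbP
    simp only [zero_apply] at this hz₀u
    linarith
  obtain ⟨y', hy'⟩ := exists_lagrange_multiplier hDconv hD0 hgD hfconv hgconv slater z'
    fun x hx z hz => huP z (mem_iUnion₂_of_mem hx hz)
  have hz₀dual := mem_iInter₂.1 (mem_iInter.1 hz₀ y') z' ⟨hpos, hne⟩
  exact (dualObj_subset_of_forall_le hy' hz₀dual).not_gt hz₀u

end Duality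

theorem strong_duality_general
    (C : Set Z) (hCcone : ∀ t : ℝ, 0 < t → ∀ z ∈ C, t • z ∈ C)
    (D : Set Y) (hDconv : Convex ℝ D)
    (hD0 : (0 : Y) ∈ D)
    (f : X → Set Z) (g : X → Set Y)
    (hfF : ∀ x, f x = closure (f x + C))
    (hgF : ∀ x, g x = closure (g x + D))
    (hfconv : Convex ℝ {q : X × Z | q.2 ∈ f q.1})
    (hgconv : Convex ℝ {q : X × Y | q.2 ∈ g q.1})
    (slater : ∃ x : X, (f x).Nonempty ∧ (g x ∩ (-(interior D))).Nonempty) :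
    valFn f g 0 = (⋂ (y' : Y →L[ℝ] ℝ), ⋂ z' ∈ posDual C \ {0}, dualObj f g y' z') ∧
    ∀ z' ∈ posDual C \ {0},
      (⨅ x ∈ {x : X | (0 : Y) ∈ g x}, scal z' (f x))
        = ⨆ y' : Y →L[ℝ] ℝ, ⨅ x : X, eadd (scal z' (f x)) (scal y' (g x)) := by
  have hfC : ∀ x, f x + C ⊆ f x := fun x => subset_closure.trans (hfF x).ge
  have hgD : ∀ x, g x + D ⊆ g x := fun x => subset_closure.trans (hgF x).ge
  refine ⟨subset_antisymm ?_ ?_, fun z' _ => ?_⟩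
  · exact subset_iInter fun y' => subset_iInter₂ fun z' _ => valFn_zero_subset_dualObj y' z'
  · exact iInter_dualObj_subset_valFn hCcone hfC hDconv hD0 hgD hfconv hgconv slater
  · exact iInf_feasible_eq_iSup_iInf_eadd hDconv hD0 hgD hfconv hgconv slater z'

/-- **Strong duality.** Let `f` and `g` be convex (convex graphs) and assume the Slater
condition: there is `x̄` with `f(x̄) ≠ ∅` and `g(x̄) ∩ (−int D) ≠ ∅`. Then `p = d` and, for
every `z* ∈ C⁺∖{0}`, `p_{z*} = d_{z*}`. -/
theorem strong_duality
    (C : Set Z) (hCconv : Convex ℝ C) (hCcone : ∀ t : ℝ, 0 < t → ∀ z ∈ C, t • z ∈ C)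
    (hC0 : (0 : Z) ∈ C)
    (D : Set Y) (hDconv : Convex ℝ D) (hDcone : ∀ t : ℝ, 0 < t → ∀ y ∈ D, t • y ∈ D)
    (hD0 : (0 : Y) ∈ D)
    (f : X → Set Z) (g : X → Set Y)
    (hfF : ∀ x, f x = closure (f x + C))
    (hgF : ∀ x, g x = closure (g x + D))
    (hfconv : Convex ℝ {q : X × Z | q.2 ∈ f q.1})
    (hgconv : Convex ℝ {q : X × Y | q.2 ∈ g q.1})
    (slater : ∃ x : X, (f x).Nonempty ∧ (g x ∩ (-(interior D))).Nonempty) :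
    valFn f g 0 = (⋂ (y' : Y →L[ℝ] ℝ), ⋂ z' ∈ posDual C \ {0}, dualObj f g y' z') ∧
    ∀ z' ∈ posDual C \ {0},
      (⨅ x ∈ {x : X | (0 : Y) ∈ g x}, scal z' (f x))
        = ⨆ y' : Y →L[ℝ] ℝ, ⨅ x : X, eadd (scal z' (f x)) (scal y' (g x)) :=
  strong_duality_general C hCcone D hDconv hD0 f g hfF hgF hfconv hgconv slater
end
end
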